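/- arXiv:1806.08323 — 13 statements merged into one kernel-verified Lean document; each statement's English description precedes it below -/
import Mathlib

section
/- Let A be a symmetric integer matrix all of whose diagonal entries are even. Then for every integer i ≥ 1, the quantity 1ᵀ Aⁱ 1 (the sum of all entries of Aⁱ) is even. -/
open Matrix Finset

lemma zmod2_mul_self : ∀ a : ZMod 2, a * a = a := by decide

lemma alt_sum (n : ℕ) (B : Matrix (Fin n) (Fin n) (ZMod 2)) (hs : B.IsSymm)
    (hd : ∀ i, B i i = 0) (x : Fin n → ZMod 2) :
    ∑ i, ∑ j, x i * (B i j * x j) = 0 := by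
  rw [← Finset.sum_product']
  refine Finset.sum_involution (fun p _ => (p.2, p.1)) ?_ ?_ (by simp) (by simp)
  · intro p _
    simp only
    have : B p.2 p.1 = B p.1 p.2 := hs.apply p.1 p.2
    rw [this, show x p.2 * (B p.1 p.2 * x p.1) = x p.1 * (B p.1 p.2 * x p.2) by ring]
    exact CharTwo.add_self_eq_zero _
  · rintro ⟨i, j⟩ _ hne
    simp only [ne_eq, Prod.mk.injEq]
    rintro ⟨h1, h2⟩
    apply hne
    simp only
    rw [← h1, hd]
    simp

lemma key_zmod (n : ℕ) (B : Matrix (Fin n) (Fin n) (ZMod 2)) (hs : B.IsSymm)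
    (hd : ∀ i, B i i = 0) :
    ∀ k : ℕ, 1 ≤ k → (fun _ : Fin n => (1 : ZMod 2)) ⬝ᵥ ((B ^ k) *ᵥ fun _ => 1) = 0 := by
  intro k
  induction k using Nat.strong_induction_on with
  | _ k ih =>
    intro hk
    set u : Fin n → ZMod 2 := fun _ => 1 with hu
    have hsympow : ∀ m : ℕ, (B ^ m)ᵀ = B ^ m := fun m => by
      rw [Matrix.transpose_pow, hs]
    rcases Nat.even_or_odd k with ⟨m, hm⟩ | ⟨m, hm⟩
    · -- k = 2m, m ≥ 1
      have hm1 : 1 ≤ m := by omega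
      set x : Fin n → ZMod 2 := (B ^ m) *ᵥ u with hx
      have h1 : u ⬝ᵥ ((B ^ k) *ᵥ u) = x ⬝ᵥ x := by
        rw [hm, pow_add, ← Matrix.mulVec_mulVec,
          Matrix.dotProduct_mulVec, ← Matrix.mulVec_transpose, hsympow]
      rw [h1]
      have h2 : x ⬝ᵥ x = u ⬝ᵥ x := by
        simp only [dotProduct, hu, one_mul]
        exact Finset.sum_congr rfl fun i _ => zmod2_mul_self _
      rw [h2, hx]
      exact ih m (by omega) hm1
    · -- k = 2m + 1
      set x : Fin n → ZMod 2 := (B ^ m) *ᵥ u with hx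
      have h1 : u ⬝ᵥ ((B ^ k) *ᵥ u) = x ⬝ᵥ (B *ᵥ x) := by
        have hpk : B ^ k = B ^ m * B * B ^ m := by
          rw [hm, show 2 * m + 1 = m + 1 + m by ring, pow_add, pow_succ]
        rw [hpk, ← Matrix.mulVec_mulVec, ← Matrix.mulVec_mulVec,
          Matrix.dotProduct_mulVec, ← Matrix.mulVec_transpose, hsympow]
      rw [h1]
      have : x ⬝ᵥ (B *ᵥ x) = ∑ i, ∑ j, x i * (B i j * x j) := by
        simp [dotProduct, Matrix.mulVec, Finset.mul_sum]
      rw [this]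
      exact alt_sum n B hs hd x

theorem stmt_0 (n : ℕ) (A : Matrix (Fin n) (Fin n) ℤ)
    (hsymm : A.IsSymm) (hdiag : ∀ i, Even (A i i)) :
    ∀ k : ℕ, 1 ≤ k → Even (∑ i, ∑ j, (A ^ k) i j) := by
  intro k hk
  set f : ℤ →+* ZMod 2 := Int.castRingHom (ZMod 2) with hf
  set B : Matrix (Fin n) (Fin n) (ZMod 2) := A.map f with hB
  have hBs : B.IsSymm := by
    unfold Matrix.IsSymm
    rw [hB, ← Matrix.transpose_map, hsymm]
  have hBd : ∀ i, B i i = 0 := by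
    intro i
    simp only [hB, Matrix.map_apply]
    obtain ⟨r, hr⟩ := hdiag i
    rw [hr, map_add]
    exact CharTwo.add_self_eq_zero (f r)
  have hkey := key_zmod n B hBs hBd k hk
  rw [even_iff_two_dvd, show ((2:ℤ) ∣ _) ↔ _ from (ZMod.intCast_zmod_eq_zero_iff_dvd _ 2).symm]
  have hcast : ((∑ i, ∑ j, (A ^ k) i j : ℤ) : ZMod 2)
      = ∑ i, ∑ j, (B ^ k) i j := by
    rw [hB, ← RingHom.mapMatrix_apply, ← map_pow]
    push_cast
    simp [RingHom.mapMatrix_apply, Matrix.map_apply, hf]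
  rw [hcast]
  have : (fun _ : Fin n => (1 : ZMod 2)) ⬝ᵥ ((B ^ k) *ᵥ fun _ => 1)
      = ∑ i, ∑ j, (B ^ k) i j := by
    simp [dotProduct, Matrix.mulVec]
  rw [← this]
  exact hkey
end

section
/- Let A be the adjacency matrix of a finite graph in which every vertex has even degree (an Euler graph). Then 1ᵀ A 1 ≡ 0 (mod 2), and for every integer i ≥ 2, 1ᵀ Aⁱ 1 ≡ 0 (mod 4). -/
theorem stmt_1 (n : ℕ) (G : SimpleGraph (Fin n)) [DecidableRel G.Adj]
    (heuler : ∀ v, Even (G.degree v)) :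
    (2 : ℤ) ∣ (∑ i, ∑ j, G.adjMatrix ℤ i j) ∧
      ∀ k : ℕ, 2 ≤ k → (4 : ℤ) ∣ ∑ i, ∑ j, (G.adjMatrix ℤ ^ k) i j := by
  set A := G.adjMatrix ℤ with hA
  have hrow : ∀ i, (∑ j, A i j) = (G.degree i : ℤ) := by
    intro i
    simp [hA, SimpleGraph.adjMatrix_apply, SimpleGraph.degree, SimpleGraph.neighborFinset]
  have hcol : ∀ p, (∑ i, A i p) = (G.degree p : ℤ) := by
    intro p
    rw [← hrow p]
    exact Finset.sum_congr rfl fun i _ => by simp [hA, SimpleGraph.adjMatrix_apply, G.adj_comm]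
  have hrow2 : ∀ i, (2 : ℤ) ∣ ∑ j, A i j := by
    intro i; rw [hrow]
    exact_mod_cast Int.natCast_dvd_natCast.mpr (heuler i).two_dvd
  have hcol2 : ∀ p, (2 : ℤ) ∣ ∑ i, A i p := by
    intro p; rw [hcol]
    exact_mod_cast Int.natCast_dvd_natCast.mpr (heuler p).two_dvd
  have step1 : ∀ (M N : Matrix (Fin n) (Fin n) ℤ),
      (∑ i, ∑ j, (M * N) i j) = ∑ p, (∑ i, M i p) * (∑ j, N p j) := by
    intro M N
    simp only [Matrix.mul_apply]
    calc (∑ i, ∑ j, ∑ p, M i p * N p j)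
        = ∑ i, ∑ p, M i p * ∑ j, N p j := by
          refine Finset.sum_congr rfl fun i _ => ?_
          rw [Finset.sum_comm]
          simp only [← Finset.mul_sum]
      _ = ∑ p, (∑ i, M i p) * (∑ j, N p j) := by
          rw [Finset.sum_comm]
          simp only [← Finset.sum_mul]
  have hcolAB : ∀ (B : Matrix (Fin n) (Fin n) ℤ) p, (2 : ℤ) ∣ ∑ i, (A * B) i p := by
    intro B p
    simp only [Matrix.mul_apply]
    rw [Finset.sum_comm]
    refine Finset.dvd_sum fun q _ => ?_
    rw [← Finset.sum_mul]
    exact (hcol2 q).mul_right _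
  constructor
  · exact Finset.dvd_sum fun i _ => hrow2 i
  · intro k hk
    obtain ⟨m, rfl⟩ : ∃ m, k = m + 2 := ⟨k - 2, by omega⟩
    have hpow : A ^ (m + 2) = (A * A ^ m) * A := by
      rw [pow_add, pow_two, ← mul_assoc, ← pow_succ, pow_succ']
    rw [hpow, step1]
    refine Finset.dvd_sum fun p _ => ?_
    obtain ⟨a, ha⟩ := hcolAB (A ^ m) p
    obtain ⟨b, hb⟩ := hrow2 p
    rw [ha, hb]
    exact ⟨a * b, by ring⟩
end

section
/- Let A be a symmetric integer matrix of order n with all diagonal entries equal to zero, and write the characteristic polynomial χ_A(x) = det(xI − A) = Σ_{i=0}^n b_i x^{n−i}. Then b_r is even for every odd index r. -/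
open Polynomial Finset Matrix Equiv

private lemma aux_even_card {n : ℕ} (σ : Equiv.Perm (Fin n)) (hσ : σ⁻¹ = σ)
    (F : Finset (Fin n)) (hF : F = Finset.univ.filter (fun i => σ i = i)) :
    Even (Fᶜ.card) := by
  have hσσ : ∀ i, σ (σ i) = i := by
    intro i
    have h : σ⁻¹ (σ i) = i := σ.symm_apply_apply i
    rwa [hσ] at h
  have hmem : ∀ a (_ : a ∈ Fᶜ), σ a ∈ Fᶜ := by
    intro a ha
    simp only [hF, Finset.mem_compl, Finset.mem_filter, Finset.mem_univ, true_and] at ha ⊢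
    intro h
    exact ha (σ.injective h)
  have hsum : ∑ _i ∈ Fᶜ, (1 : ZMod 2) = 0 :=
    Finset.sum_involution (fun i _ => σ i) (fun a _ => by decide)
      (fun a ha _ => by
        simp only [hF, Finset.mem_compl, Finset.mem_filter, Finset.mem_univ, true_and] at ha
        exact ha)
      hmem (fun a _ => hσσ a)
  rw [Finset.sum_const, nsmul_eq_mul, mul_one] at hsum
  have := (ZMod.natCast_eq_zero_iff _ 2).mp hsum
  exact even_iff_two_dvd.mpr this

private lemma aux_charpoly_coeff {n : ℕ} (B : Matrix (Fin n) (Fin n) (ZMod 2))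
    (hs : B.IsSymm) (hd : ∀ i, B i i = 0) {r : ℕ} (hr : r ≤ n) (hodd : Odd r) :
    B.charpoly.coeff (n - r) = 0 := by
  classical
  set k := n - r with hk
  set N := charmatrix B with hN
  have Ndiag : ∀ i, N i i = (X : (ZMod 2)[X]) := by
    intro i; rw [hN, charmatrix_apply_eq, hd, map_zero, sub_zero]
  have Nsymm : ∀ i j, N i j = N j i := by
    intro i j
    by_cases h : i = j
    · rw [h]
    · rw [hN, charmatrix_apply_ne _ _ _ h, charmatrix_apply_ne _ _ _ (Ne.symm h),
        hs.apply]
  have hchar : B.charpoly = N.det := rfl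
  rw [hchar, Matrix.det_apply, Polynomial.finset_sum_coeff]
  -- f σ is the coefficient contribution of permutation σ
  set f : Equiv.Perm (Fin n) → ZMod 2 :=
    fun σ => (Equiv.Perm.sign σ • ∏ i, N (σ i) i).coeff k with hf
  have hfinv : ∀ σ : Equiv.Perm (Fin n), f σ⁻¹ = f σ := by
    intro σ
    have hprod : ∏ i, N (σ⁻¹ i) i = ∏ i, N (σ i) i := by
      have h1 : ∏ i, N (σ⁻¹ (σ i)) (σ i) = ∏ i, N (σ⁻¹ i) i :=
        Equiv.prod_comp σ (fun i => N (σ⁻¹ i) i)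
      rw [← h1]
      simp only [Equiv.Perm.inv_def, Equiv.symm_apply_apply]
      exact Fintype.prod_congr _ _ (fun i => Nsymm i (σ i))
    rw [hf]
    simp only [Equiv.Perm.sign_inv, hprod]
  -- involution terms vanish at coefficient k
  have hinvterm : ∀ σ : Equiv.Perm (Fin n), σ⁻¹ = σ → f σ = 0 := by
    intro σ hσ
    set F : Finset (Fin n) := Finset.univ.filter (fun i => σ i = i) with hF
    have hFc : Even (Fᶜ.card) := aux_even_card σ hσ F hF
    have hprod : ∏ i, N (σ i) i
        = X ^ F.card * C (∏ i ∈ Fᶜ, (-(B (σ i) i))) := by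
      rw [← Finset.prod_mul_prod_compl F (fun i => N (σ i) i)]
      congr 1
      · rw [Finset.prod_congr rfl (fun i hi => ?_), Finset.prod_const]
        have : σ i = i := by simpa [hF] using hi
        rw [this, Ndiag]
      · rw [map_prod]
        refine Finset.prod_congr rfl (fun i hi => ?_)
        have hne : σ i ≠ i := by
          simp only [hF, Finset.mem_compl, Finset.mem_filter, Finset.mem_univ, true_and] at hi
          exact hi
        rw [hN, charmatrix_apply_ne _ _ _ hne, map_neg]
    have hkne : k ≠ F.card := by
      intro h
      have hcards := Finset.card_add_card_compl F
      simp only [Fintype.card_fin] at hcards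
      have : r = Fᶜ.card := by omega
      rw [this] at hodd
      exact (Nat.not_even_iff_odd.mpr hodd) hFc
    have hc0 : (X ^ F.card * C (∏ i ∈ Fᶜ, (-(B (σ i) i)))).coeff k = 0 := by
      rw [mul_comm, Polynomial.coeff_C_mul, Polynomial.coeff_X_pow, if_neg hkne, mul_zero]
    rw [hf]
    simp only [Polynomial.coeff_smul, hprod, hc0, smul_zero]
  -- split the sum
  have hsplit := Finset.sum_filter_add_sum_filter_not Finset.univ
    (fun σ : Equiv.Perm (Fin n) => σ⁻¹ = σ) f
  have h1 : ∑ σ ∈ Finset.univ.filter (fun σ : Equiv.Perm (Fin n) => σ⁻¹ = σ), f σ = 0 :=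
    Finset.sum_eq_zero (fun σ hσ => hinvterm σ (by simpa using hσ))
  have h2 : ∑ σ ∈ Finset.univ.filter (fun σ : Equiv.Perm (Fin n) => ¬σ⁻¹ = σ), f σ = 0 := by
    have hmem : ∀ a (_ : a ∈ Finset.univ.filter (fun σ : Equiv.Perm (Fin n) => ¬σ⁻¹ = σ)),
        a⁻¹ ∈ Finset.univ.filter (fun σ : Equiv.Perm (Fin n) => ¬σ⁻¹ = σ) := by
      intro a ha
      simp only [Finset.mem_filter, Finset.mem_univ, true_and] at ha ⊢
      intro h
      rw [inv_inv] at h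
      exact ha h.symm
    exact Finset.sum_involution (fun σ _ => σ⁻¹)
      (fun a _ => by
        rw [hfinv a]
        have h20 : (2 : ZMod 2) = 0 := by decide
        rw [← two_mul, h20, zero_mul])
      (fun a ha _ => by simpa using ha)
      hmem (fun a _ => inv_inv a)
  calc ∑ σ : Equiv.Perm (Fin n), f σ = _ := hsplit.symm
    _ = 0 := by rw [h1, h2, add_zero]

theorem stmt_3 (n : ℕ) (A : Matrix (Fin n) (Fin n) ℤ)
    (hsymm : A.IsSymm) (hdiag : ∀ i, A i i = 0) :
    ∀ r : ℕ, r ≤ n → Odd r → Even (A.charpoly.coeff (n - r)) := by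
  intro r hr hodd
  rw [even_iff_two_dvd]
  have key : ((A.charpoly.coeff (n - r) : ℤ) : ZMod 2) = 0 := by
    have h1 : ((A.charpoly.coeff (n - r) : ℤ) : ZMod 2)
        = (A.charpoly.map (Int.castRingHom (ZMod 2))).coeff (n - r) := by
      rw [Polynomial.coeff_map]; rfl
    rw [h1, ← Matrix.charpoly_map]
    apply aux_charpoly_coeff
    · exact Matrix.IsSymm.ext fun i j => by
        simp only [Matrix.map_apply]
        rw [hsymm.apply]
    · intro i
      simp [Matrix.map_apply, hdiag]
    · exact hr
    · exact hodd
  have := (ZMod.intCast_zmod_eq_zero_iff_dvd _ 2).mp key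
  exact_mod_cast this
end

section
/- Let Γ be a graph with adjacency matrix A and let N ≥ 3 be an odd integer. Then Σ_{d | N} φ(N/d) · tr(A^d) ≡ 0 (mod 2N), where φ is Euler's totient function. -/
open Finset
section
variable {V : Type*} [Fintype V] [DecidableEq V] (G : SimpleGraph V) [DecidableRel G.Adj]

/-- paths of length m from u to v as vertex sequences -/
abbrev PathFun (m : ℕ) (u v : V) : Type _ :=
  {f : Fin (m+1) → V // f 0 = u ∧ f (Fin.last m) = v ∧ ∀ i : Fin m, G.Adj (f i.castSucc) (f i.succ)}

def pathSuccEquiv (m : ℕ) (u v : V) :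
    PathFun G (m+1) u v ≃ Σ w : {w // w ∈ G.neighborFinset u}, PathFun G m w v where
  toFun f := ⟨⟨f.1 1, by
      rw [SimpleGraph.mem_neighborFinset]
      have := f.2.2.2 0
      simpa [f.2.1] using this⟩,
    ⟨f.1 ∘ Fin.succ, rfl, by simpa using f.2.2.1, fun i => by
      have := f.2.2.2 i.succ
      rw [← Fin.succ_castSucc] at this
      exact this⟩⟩
  invFun p := ⟨Fin.cons u p.2.1, by simp, by
      rw [← Fin.succ_last, Fin.cons_succ]; exact p.2.2.2.1, fun i => by
      induction i using Fin.cases with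
      | zero => simpa [p.2.2.1] using (SimpleGraph.mem_neighborFinset ..).1 p.1.2
      | succ j =>
        have := p.2.2.2.2 j
        rw [← Fin.succ_castSucc, Fin.cons_succ, Fin.cons_succ]
        exact this⟩
  left_inv f := by
    apply Subtype.ext
    have h0 : f.1 0 = u := f.2.1
    funext i
    induction i using Fin.cases with
    | zero => simpa using h0.symm
    | succ j => simp
  right_inv p := by
    obtain ⟨⟨w, hw⟩, g, hg0, hgl, hadj⟩ := p
    have h1 : (Fin.cons u g : Fin (m+2) → V) 1 = w := hg0
    refine Sigma.ext (Subtype.ext h1) ((Subtype.heq_iff_coe_eq ?_).2 ?_)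
    · intro f
      rw [show ((⟨(Fin.cons u g : Fin (m+2) → V) 1, by
        rw [SimpleGraph.mem_neighborFinset]
        exact (SimpleGraph.mem_neighborFinset ..).1 (h1 ▸ hw)⟩ : {w // w ∈ G.neighborFinset u}) : V) = w from h1]
    · funext i; simp

theorem card_pathFun (m : ℕ) (u v : V) :
    ((G.adjMatrix ℤ) ^ m) u v = Fintype.card (PathFun G m u v) := by
  induction m generalizing u v with
  | zero =>
    rw [pow_zero, Matrix.one_apply]
    by_cases h : u = v
    · subst h
      simp only [if_pos rfl]
      have : Fintype.card (PathFun G 0 u u) = 1 := by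
        rw [Fintype.card_eq_one_iff]
        refine ⟨⟨fun _ => u, rfl, rfl, fun i => i.elim0⟩, fun f => Subtype.ext ?_⟩
        funext i
        have : i = 0 := Fin.ext (by omega)
        rw [this, f.2.1]
      rw [this]; norm_num
    · simp only [if_neg h]
      have : Fintype.card (PathFun G 0 u v) = 0 := by
        rw [Fintype.card_eq_zero_iff]
        refine ⟨fun f => h ?_⟩
        obtain ⟨f, h1, h2, -⟩ := f
        rw [← h1, ← h2]
        rfl
      rw [this]; norm_num
  | succ m ih =>
    rw [pow_succ', SimpleGraph.adjMatrix_mul_apply]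
    rw [Fintype.card_congr (pathSuccEquiv G m u v), Fintype.card_sigma]
    rw [← Finset.sum_coe_sort (G.neighborFinset u)]
    push_cast
    exact Finset.sum_congr rfl fun w _ => ih w v

abbrev Cyc (m : ℕ) : Type _ := {f : ZMod m → V // ∀ i, G.Adj (f i) (f (i+1))}

private lemma val_add_one_mod' (n : ℕ) [NeZero n] (j : ZMod n) :
    (j + 1).val = (j.val + 1) % n := by
  rw [ZMod.val_add, ZMod.val_one_eq_one_mod]
  conv_rhs => rw [Nat.add_mod j.val 1 n]
  rw [Nat.add_mod j.val (1 % n) n, Nat.mod_mod]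

private lemma val_add_one_mod (k : ℕ) (j : ZMod (k+1)) :
    (j + 1).val = (j.val + 1) % (k+1) := by
  rw [ZMod.val_add, ZMod.val_one_eq_one_mod]
  conv_rhs => rw [Nat.add_mod j.val 1 (k+1)]
  rw [Nat.add_mod j.val (1 % (k+1)) (k+1), Nat.mod_mod]

def cycEquiv (k : ℕ) : Cyc G (k+1) ≃ Σ u : V, PathFun G (k+1) u u where
  toFun f := ⟨f.1 0, fun i => f.1 ((i : ℕ) : ZMod (k+1)), by simp, by
      simp [ZMod.natCast_self], fun i => by
      have := f.2 ((i : ℕ) : ZMod (k+1))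
      simpa using this⟩
  invFun p := ⟨fun j => p.2.1 ⟨j.val % (k+1), Nat.lt_succ_of_lt (Nat.mod_lt _ k.succ_pos)⟩,
    fun j => by
      obtain ⟨u, g, hg0, hgl, hadj⟩ := p
      simp only
      have h1 : j.val % (k+1) = j.val := Nat.mod_eq_of_lt j.val_lt
      rcases Nat.lt_or_ge (j.val + 1) (k+1) with hc | hc
      · have h2 : (j+1).val % (k+1) = j.val + 1 := by
          rw [val_add_one_mod, Nat.mod_mod, Nat.mod_eq_of_lt hc]
        have := hadj ⟨j.val, by omega⟩
        convert this using 2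
        · exact Fin.ext (by simp [h1])
        · exact Fin.ext (by simp [h2])
      · have hk : j.val = k := by have := j.val_lt; omega
        have h2 : (j+1).val % (k+1) = 0 := by
          rw [val_add_one_mod, Nat.mod_mod, hk, Nat.mod_self]
        have hA := hadj ⟨k, Nat.lt_succ_self k⟩
        have e1 : (⟨j.val % (k+1), Nat.lt_succ_of_lt (Nat.mod_lt _ k.succ_pos)⟩ : Fin (k+2))
            = (⟨k, Nat.lt_succ_self k⟩ : Fin (k+1)).castSucc := Fin.ext (by simp [h1, hk])
        have e2 : (⟨(j+1).val % (k+1), Nat.lt_succ_of_lt (Nat.mod_lt _ k.succ_pos)⟩ : Fin (k+2))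
            = 0 := Fin.ext (by simp [h2])
        rw [e1, e2, hg0, ← hgl]
        exact hA⟩
  left_inv f := by
    apply Subtype.ext; funext j
    show f.1 (((j.val % (k+1) : ℕ)) : ZMod (k+1)) = f.1 j
    congr 1
    rw [Nat.mod_eq_of_lt j.val_lt, ZMod.natCast_val, ZMod.cast_id]
  right_inv p := by
    obtain ⟨u, g, hg0, hgl, hadj⟩ := p
    have key : ∀ i : Fin (k+2), g ⟨i.val % (k+1), Nat.lt_succ_of_lt (Nat.mod_lt _ k.succ_pos)⟩
        = g i := by
      intro i
      rcases Nat.lt_or_ge i.val (k+1) with hc | hc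
      · congr 1; exact Fin.ext (by simp [Nat.mod_eq_of_lt hc])
      · have hi : i.val = k + 1 := by have := i.isLt; omega
        have e0 : (⟨i.val % (k+1), Nat.lt_succ_of_lt (Nat.mod_lt _ k.succ_pos)⟩ : Fin (k+2))
            = 0 := Fin.ext (by simp [hi])
        have el : i = Fin.last (k+1) := Fin.ext (by simp [hi])
        rw [e0, el, hg0, hgl]
    have h1 : g ⟨(0 : ZMod (k+1)).val % (k+1), Nat.lt_succ_of_lt (Nat.mod_lt _ k.succ_pos)⟩
        = u := by
      have e : (⟨(0 : ZMod (k+1)).val % (k+1),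
          Nat.lt_succ_of_lt (Nat.mod_lt _ k.succ_pos)⟩ : Fin (k+2)) = 0 := Fin.ext (by simp)
      rw [e, hg0]
    refine Sigma.ext h1 ((Subtype.heq_iff_coe_eq ?_).2 ?_)
    · intro x; dsimp only; rw [h1]
    · funext i
      show g ⟨(((i : ℕ) : ZMod (k+1)).val % (k+1)),
          Nat.lt_succ_of_lt (Nat.mod_lt _ k.succ_pos)⟩ = g i
      have e : (⟨(((i : ℕ) : ZMod (k+1)).val % (k+1)),
          Nat.lt_succ_of_lt (Nat.mod_lt _ k.succ_pos)⟩ : Fin (k+2))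
          = ⟨i.val % (k+1), Nat.lt_succ_of_lt (Nat.mod_lt _ k.succ_pos)⟩ :=
        Fin.ext (by simp [ZMod.val_natCast, Nat.mod_mod])
      rw [e]; exact key i

theorem trace_pow_eq_card_cyc (k : ℕ) :
    Matrix.trace (G.adjMatrix ℤ ^ (k+1)) = (Fintype.card (Cyc G (k+1)) : ℤ) := by
  rw [Fintype.card_congr (cycEquiv G k), Fintype.card_sigma, Matrix.trace]
  push_cast
  exact Finset.sum_congr rfl fun u _ => card_pathFun G (k+1) u u


instance cycVAdd (m : ℕ) : VAdd (ZMod m) (Cyc G m) :=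
  ⟨fun a f => ⟨fun j => f.1 (j + a), fun j => by
    have := f.2 (j + a)
    simpa [add_right_comm] using this⟩⟩

lemma cyc_vadd_apply (m : ℕ) (a : ZMod m) (f : Cyc G m) (j : ZMod m) :
    (a +ᵥ f).1 j = f.1 (j + a) := rfl

instance cycAddAction (m : ℕ) : AddAction (ZMod m) (Cyc G m) :=
  { cycVAdd G m with
    zero_vadd := fun f => Subtype.ext (funext fun j => by
      rw [cyc_vadd_apply, add_zero])
    add_vadd := fun a b f => Subtype.ext (funext fun j => by
      rw [cyc_vadd_apply, cyc_vadd_apply, cyc_vadd_apply, add_assoc]) }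

section FixedBy
variable (N : ℕ) [NeZero N] (a : ZMod N)

lemma cyc_period_aux (f : Cyc G N) (hper : ∀ j, f.1 (j + a) = f.1 j) :
    ∀ (t : ℕ) (j : ZMod N), f.1 (j + (t : ZMod N) * a) = f.1 j := by
  intro t
  induction t with
  | zero => simp
  | succ t ih =>
    intro j
    have : j + ((t + 1 : ℕ) : ZMod N) * a = (j + a) + (t : ZMod N) * a := by push_cast; ring
    rw [this, ih (j + a), hper j]

lemma cyc_period_gcd (f : Cyc G N) (hper : ∀ j, f.1 (j + a) = f.1 j) (x : ℕ) :
    f.1 ((x : ZMod N)) = f.1 ((x % Nat.gcd a.val N : ℕ) : ZMod N) := by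
  set d := Nat.gcd a.val N with hd
  -- (d : ZMod N) is a ℕ-multiple (in fact ZMod-multiple) of a
  have hbez : (d : ℤ) = a.val * Nat.gcdA a.val N + N * Nat.gcdB a.val N :=
    Nat.gcd_eq_gcd_ab a.val N
  have hcast : (d : ZMod N) = ((Nat.gcdA a.val N : ℤ) : ZMod N) * a := by
    have := congrArg (fun z : ℤ => (z : ZMod N)) hbez
    push_cast at this
    rw [ZMod.natCast_self] at this
    simpa [ZMod.natCast_val, ZMod.cast_id, mul_comm] using this
  set c : ZMod N := ((Nat.gcdA a.val N : ℤ) : ZMod N) with hc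
  -- period d via period a
  have hperd : ∀ j, f.1 (j + (d : ZMod N)) = f.1 j := by
    intro j
    have h1 : (d : ZMod N) = (c.val : ZMod N) * a := by
      rw [hcast, ZMod.natCast_val, ZMod.cast_id]
    rw [h1]
    exact cyc_period_aux G N a f hper c.val j
  -- now multiples of d
  have hmul : ∀ (s : ℕ) (j : ZMod N), f.1 (j + (s : ZMod N) * (d : ZMod N)) = f.1 j := by
    intro s
    induction s with
    | zero => simp
    | succ s ih =>
      intro j
      have : j + ((s + 1 : ℕ) : ZMod N) * (d : ZMod N)
          = (j + (d : ZMod N)) + (s : ZMod N) * (d : ZMod N) := by push_cast; ring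
      rw [this, ih, hperd]
  conv_lhs => rw [show x = x % d + d * (x / d) from (Nat.mod_add_div x d).symm]
  push_cast
  rw [show ((x % d : ℕ) : ZMod N) + (d : ZMod N) * ((x / d : ℕ) : ZMod N)
      = ((x % d : ℕ) : ZMod N) + ((x / d : ℕ) : ZMod N) * (d : ZMod N) by ring]
  exact hmul (x / d) _

lemma card_fixedBy_eq :
    Nat.card (AddAction.fixedBy (Cyc G N) a) = Nat.card (Cyc G (Nat.gcd a.val N)) := by
  haveI : NeZero (Nat.gcd a.val N) :=
    NeZero.of_pos (Nat.gcd_pos_of_pos_right _ (Nat.pos_of_ne_zero (NeZero.ne N)))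
  set d := Nat.gcd a.val N with hd
  have hdN : d ∣ N := Nat.gcd_dvd_right _ _
  have hda : d ∣ a.val := Nat.gcd_dvd_left _ _
  have hdle : d ≤ N := Nat.le_of_dvd (Nat.pos_of_ne_zero (NeZero.ne N)) hdN
  apply Nat.card_congr
  have hper : ∀ x : AddAction.fixedBy (Cyc G N) a, ∀ j, x.1.1 (j + a) = x.1.1 j :=
    fun x j => congrArg (fun (F : Cyc G N) => F.1 j) x.2
  refine ⟨fun x => ⟨fun i : ZMod d => x.1.1 ((i.val : ℕ) : ZMod N), fun i => ?_⟩,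
    fun g => ⟨⟨fun j : ZMod N => g.1 ((j.val : ℕ) : ZMod d), fun j => ?_⟩, ?_⟩, ?_, ?_⟩
  · -- toFun adjacency
    have fmod := cyc_period_gcd G N a x.1 (hper x)
    show G.Adj (x.1.1 ((i.val : ℕ) : ZMod N)) (x.1.1 (((i+1).val : ℕ) : ZMod N))
    rw [val_add_one_mod' d i, ← fmod (i.val + 1)]
    have := x.1.2 ((i.val : ℕ) : ZMod N)
    push_cast
    exact this
  · -- invFun adjacency
    have h2 : (((j+1).val : ℕ) : ZMod d) = ((j.val + 1 : ℕ) : ZMod d) := by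
      rw [val_add_one_mod' N j]
      exact (ZMod.natCast_eq_natCast_iff _ _ _).2
        ((Nat.mod_modEq _ _).of_dvd hdN)
    show G.Adj (g.1 ((j.val : ℕ) : ZMod d)) (g.1 (((j+1).val : ℕ) : ZMod d))
    rw [h2]
    have := g.2 ((j.val : ℕ) : ZMod d)
    push_cast
    push_cast at this
    exact this
  · -- fixed
    show a +ᵥ _ = _
    apply Subtype.ext; funext j
    rw [cyc_vadd_apply]
    show g.1 (((j + a).val : ℕ) : ZMod d) = g.1 ((j.val : ℕ) : ZMod d)
    have hkey : (((j.val + a.val) % N : ℕ) : ZMod d) = ((j.val : ℕ) : ZMod d) := by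
      refine (ZMod.natCast_eq_natCast_iff _ _ _).2 ?_
      calc (j.val + a.val) % N ≡ j.val + a.val [MOD d] := (Nat.mod_modEq _ _).of_dvd hdN
        _ ≡ j.val + 0 [MOD d] := Nat.ModEq.add_left _ (Nat.modEq_zero_iff_dvd.2 hda)
        _ = j.val := add_zero _
    rw [ZMod.val_add, hkey]
  · -- left inverse
    intro x
    apply Subtype.ext; apply Subtype.ext; funext j
    show x.1.1 (((((j.val : ℕ) : ZMod d)).val : ℕ) : ZMod N) = x.1.1 j
    rw [ZMod.val_natCast]
    rw [← cyc_period_gcd G N a x.1 (hper x) j.val, ZMod.natCast_rightInverse j]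
  · -- right inverse
    intro g
    apply Subtype.ext; funext i
    show g.1 (((((i.val : ℕ) : ZMod N)).val : ℕ) : ZMod d) = g.1 i
    rw [ZMod.val_natCast, Nat.mod_eq_of_lt (lt_of_lt_of_le i.val_lt hdle),
      ZMod.natCast_rightInverse i]

end FixedBy

lemma N_dvd_sum (N : ℕ) [NeZero N] :
    N ∣ ∑ a : ZMod N, Nat.card (Cyc G (Nat.gcd (ZMod.val a) N)) := by
  classical
  haveI : ∀ a : ZMod N, Fintype (AddAction.fixedBy (Cyc G N) a) := fun a => Fintype.ofFinite _
  haveI : Fintype (AddAction.orbitRel.Quotient (ZMod N) (Cyc G N)) := Fintype.ofFinite _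
  have hb := AddAction.sum_card_fixedBy_eq_card_orbits_mul_card_addGroup (ZMod N) (Cyc G N)
  have h1 : ∑ a : ZMod N, Nat.card (Cyc G (Nat.gcd (ZMod.val a) N))
      = ∑ a : ZMod N, Fintype.card (AddAction.fixedBy (Cyc G N) a) := by
    refine Finset.sum_congr rfl fun a _ => ?_
    rw [← card_fixedBy_eq G N a, Nat.card_eq_fintype_card]
  rw [h1, hb, ZMod.card]
  exact dvd_mul_left N _

lemma sum_gcd_eq_totient_sum (N : ℕ) [NeZero N] (F : ℕ → ℕ) :
    ∑ a : ZMod N, F (Nat.gcd (ZMod.val a) N)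
      = ∑ d ∈ N.divisors, Nat.totient (N / d) * F d := by
  have hN : N ≠ 0 := NeZero.ne N
  have h1 : ∑ a : ZMod N, F (Nat.gcd (ZMod.val a) N)
      = ∑ k ∈ Finset.range N, F (Nat.gcd N k) := by
    refine Finset.sum_bij' (fun (a : ZMod N) _ => a.val) (fun k _ => (k : ZMod N))
      (fun a _ => Finset.mem_range.2 a.val_lt) (fun k _ => Finset.mem_univ _)
      (fun a _ => ZMod.natCast_rightInverse a) (fun k hk => ?_) (fun a _ => ?_)
    · show ((k : ZMod N)).val = k
      rw [ZMod.val_natCast, Nat.mod_eq_of_lt (Finset.mem_range.1 hk)]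
    · show F (Nat.gcd (ZMod.val a) N) = F (Nat.gcd N a.val)
      rw [Nat.gcd_comm]
  rw [h1, ← Finset.sum_fiberwise_of_maps_to (g := fun k => Nat.gcd N k)
    (t := N.divisors) (fun k _ => Nat.mem_divisors.2 ⟨Nat.gcd_dvd_left _ _, hN⟩)]
  refine Finset.sum_congr rfl fun d hd => ?_
  obtain ⟨hdN, -⟩ := Nat.mem_divisors.1 hd
  have : ∀ k ∈ Finset.filter (fun k => Nat.gcd N k = d) (Finset.range N),
      F (Nat.gcd N k) = F d := fun k hk => by rw [(Finset.mem_filter.1 hk).2]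
  rw [Finset.sum_congr rfl this, Finset.sum_const, Nat.totient_div_of_dvd hdN, smul_eq_mul]

lemma even_card_cyc (N : ℕ) [NeZero N] (hodd : Odd N) : 2 ∣ Nat.card (Cyc G N) := by
  classical
  set rev : Function.End (Cyc G N) := fun f => ⟨fun i => f.1 (-i), fun i => by
    have h := f.2 (-i - 1)
    rw [sub_add_cancel] at h
    have e : -(i+1) = -i - 1 := by ring
    show G.Adj (f.1 (-i)) (f.1 (-(i+1)))
    rw [e]
    exact h.symm⟩ with hrev
  have hrev2 : rev ^ 2 ^ 1 = 1 := by
    funext f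
    show rev (rev f) = f
    apply Subtype.ext; funext i
    show f.1 (- - i) = f.1 i
    rw [neg_neg]
  haveI : Fact (Nat.Prime 2) := ⟨Nat.prime_two⟩
  have h := Equiv.Perm.card_fixedPoints_modEq (f := rev) hrev2
  have hempty : Fintype.card rev.fixedPoints = 0 := by
    rw [Fintype.card_eq_zero_iff]
    constructor
    rintro ⟨x, hx⟩
    have hfix : ∀ i, x.1 (-i) = x.1 i := fun i => congrFun (congrArg Subtype.val hx) i
    set i0 : ZMod N := (((N-1)/2 : ℕ) : ZMod N) with hi0
    have hN1 : ((N-1)/2 + (N-1)/2 + 1 : ℕ) = N := by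
      obtain ⟨m, hm⟩ := hodd; omega
    have hkey : i0 + i0 + 1 = 0 := by
      rw [hi0]
      have : (((N-1)/2 + (N-1)/2 + 1 : ℕ) : ZMod N) = ((N : ℕ) : ZMod N) := by rw [hN1]
      push_cast at this
      rw [this, ZMod.natCast_self]
    have hneg : -i0 = i0 + 1 := by
      have h2 : (i0 + 1) + i0 = 0 := by rw [add_comm, ← add_assoc]; exact hkey
      exact neg_eq_of_add_eq_zero_left h2 ▸ rfl
    have hAdj := x.2 i0
    rw [← hneg, hfix i0] at hAdj
    exact G.irrefl hAdj
  rw [hempty] at h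
  rw [Nat.card_eq_fintype_card]
  exact (Nat.modEq_zero_iff_dvd).1 h

lemma nat_main (N : ℕ) (hN : 3 ≤ N) (hodd : Odd N) :
    2 * N ∣ ∑ d ∈ N.divisors, Nat.totient (N / d) * Nat.card (Cyc G d) := by
  haveI : NeZero N := ⟨by omega⟩
  have hNdvd : N ∣ ∑ d ∈ N.divisors, Nat.totient (N / d) * Nat.card (Cyc G d) := by
    rw [← sum_gcd_eq_totient_sum N (fun d => Nat.card (Cyc G d))]
    exact N_dvd_sum G N
  have h2 : 2 ∣ ∑ d ∈ N.divisors, Nat.totient (N / d) * Nat.card (Cyc G d) := by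
    refine Finset.dvd_sum fun d hd => ?_
    obtain ⟨hdN, hN0⟩ := Nat.mem_divisors.1 hd
    by_cases hdn : d = N
    · subst hdn
      exact Dvd.dvd.mul_left (even_card_cyc G d hodd) _
    · refine Dvd.dvd.mul_right ?_ _
      have hq : N / d ∣ N := Nat.div_dvd_of_dvd hdN
      have hq1 : N / d ≠ 1 := by
        intro h1
        exact hdn (by rw [← Nat.div_div_self hdN hN0, h1, Nat.div_one])
      have hqodd : Odd (N / d) :=
        (Nat.Coprime.coprime_dvd_right hq hodd.coprime_two_left).odd_of_left
      have hq2 : 2 < N / d := by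
        have hqpos : 0 < N / d :=
          Nat.pos_of_ne_zero (fun h0 => hN0 (Nat.eq_zero_of_zero_dvd (h0 ▸ hq)))
        have hne2 : N / d ≠ 2 := fun h2 => by
          rw [h2] at hqodd; exact (by decide : ¬ Odd 2) hqodd
        omega
      exact (Nat.totient_even hq2).two_dvd
  exact Nat.Coprime.mul_dvd_of_dvd_of_dvd (hodd.coprime_two_left) h2 hNdvd

end

theorem stmt_4 (n : ℕ) (G : SimpleGraph (Fin n)) [DecidableRel G.Adj]
    (N : ℕ) (hN : 3 ≤ N) (hodd : Odd N) :
    (2 * (N : ℤ)) ∣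
      ∑ d ∈ N.divisors, (Nat.totient (N / d) : ℤ) * Matrix.trace (G.adjMatrix ℤ ^ d) := by
  have hcast : ∑ d ∈ N.divisors, (Nat.totient (N / d) : ℤ) * Matrix.trace (G.adjMatrix ℤ ^ d)
      = ((∑ d ∈ N.divisors, Nat.totient (N / d) * Nat.card (Cyc G d) : ℕ) : ℤ) := by
    push_cast
    refine Finset.sum_congr rfl fun d hd => ?_
    obtain ⟨hdN, hN0⟩ := Nat.mem_divisors.1 hd
    have hd0 : d ≠ 0 := by rintro rfl; exact hN0 (Nat.eq_zero_of_zero_dvd hdN)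
    obtain ⟨k, rfl⟩ := Nat.exists_eq_succ_of_ne_zero hd0
    haveI : NeZero (k+1) := ⟨Nat.succ_ne_zero k⟩
    rw [trace_pow_eq_card_cyc, Nat.card_eq_fintype_card]
  rw [hcast]
  have := nat_main G N hN hodd
  exact_mod_cast Int.natCast_dvd_natCast.2 this
end

section
/- Let Γ be a graph with adjacency matrix A and let N ≥ 4 be an even integer. Then Σ_{d | N} φ(N/d) · tr(A^d) + (N/2) · 1ᵀ A^{N/2} 1 ≡ 0 (mod 2N). -/
set_option linter.unusedSectionVars false
set_option maxHeartbeats 1000000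

namespace Stmt5Aux
open Matrix
variable {n : ℕ} (G : SimpleGraph (Fin n)) [DecidableRel G.Adj]

local notation "A" => G.adjMatrix ℤ

def consE (m : ℕ) : Fin n × (Fin (m+1) → Fin n) ≃ (Fin (m+2) → Fin n) where
  toFun p := Fin.cons p.1 p.2
  invFun f := (f 0, fun t => f t.succ)
  left_inv p := by simp
  right_inv f := by
    funext t
    exact Fin.cases rfl (fun i => by simp) t

lemma lin (m : ℕ) (u v : Fin n → ℤ) :
    ∑ f : Fin (m+1) → Fin n,
      (∏ t : Fin m, A (f t.castSucc) (f t.succ)) * (u (f 0) * v (f (Fin.last m)))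
      = u ⬝ᵥ ((A ^ m) *ᵥ v) := by
  induction m generalizing u with
  | zero =>
    rw [Fintype.sum_equiv (Equiv.funUnique (Fin 1) (Fin n)) _
      (fun x => u x * v x) (by intro f; simp [Fin.last])]
    simp [dotProduct]
  | succ m ih =>
    rw [← Equiv.sum_comp (consE m) _]
    rw [Fintype.sum_prod_type]
    have step : ∀ (x : Fin n) (g : Fin (m+1) → Fin n),
        (∏ t : Fin (m+1), A ((consE m) (x, g) t.castSucc) ((consE m) (x, g) t.succ)) *
          (u ((consE m) (x, g) 0) * v ((consE m) (x, g) (Fin.last (m+1))))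
        = (A x (g 0) * ∏ t : Fin m, A (g t.castSucc) (g t.succ)) *
            (u x * v (g (Fin.last m))) := by
      intro x g
      have hc : (consE m) (x, g) = (Fin.cons x g : Fin (m+2) → Fin n) := rfl
      rw [hc]
      have h1 : (∏ t : Fin (m+1), A ((Fin.cons x g : Fin (m+2) → Fin n) t.castSucc) ((Fin.cons x g : Fin (m+2) → Fin n) t.succ))
          = A x (g 0) * ∏ t : Fin m, A (g t.castSucc) (g t.succ) := by
        simp only [Fin.prod_univ_succ, Fin.castSucc_zero, Fin.cons_zero, Fin.cons_succ,
          ← Fin.succ_castSucc]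
      have h2 : (Fin.cons x g : Fin (m+2) → Fin n) (Fin.last (m+1)) = g (Fin.last m) := by
        rw [← Fin.succ_last, Fin.cons_succ]
      rw [h1, h2, Fin.cons_zero]
    simp only [step]
    have swap1 : ∑ x : Fin n, ∑ g : Fin (m+1) → Fin n,
        (A x (g 0) * ∏ t : Fin m, A (g t.castSucc) (g t.succ)) * (u x * v (g (Fin.last m)))
        = ∑ g : Fin (m+1) → Fin n,
          (∏ t : Fin m, A (g t.castSucc) (g t.succ)) *
            ((u ᵥ* A) (g 0) * v (g (Fin.last m))) := by
      rw [Finset.sum_comm]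
      refine Finset.sum_congr rfl fun g _ => ?_
      simp only [Matrix.vecMul, dotProduct, Finset.sum_mul, Finset.mul_sum]
      refine Finset.sum_congr rfl fun x _ => by ring
    rw [swap1, ih (u ᵥ* A), pow_succ', Matrix.dotProduct_mulVec, Matrix.dotProduct_mulVec,
      Matrix.vecMul_vecMul]


lemma count (m : ℕ) (P : (Fin (m+1) → Fin n) → Prop) [DecidablePred P] :
    ((Fintype.card {f : Fin (m+1) → Fin n //
        (∀ t : Fin m, G.Adj (f t.castSucc) (f t.succ)) ∧ P f}) : ℤ)
      = ∑ f : Fin (m+1) → Fin n,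
          (∏ t : Fin m, A (f t.castSucc) (f t.succ)) * (if P f then 1 else 0) := by
  rw [Fintype.card_subtype, Finset.card_filter]
  push_cast
  refine Finset.sum_congr rfl fun f _ => ?_
  simp only [SimpleGraph.adjMatrix_apply, Finset.prod_boole]
  by_cases h1 : ∀ t : Fin m, G.Adj (f t.castSucc) (f t.succ) <;>
    by_cases h2 : P f <;> simp [h1, h2]

lemma trace_eq (m : ℕ) :
    Matrix.trace (A ^ m)
      = ∑ f : Fin (m+1) → Fin n,
          (∏ t : Fin m, A (f t.castSucc) (f t.succ)) *
            (if f 0 = f (Fin.last m) then 1 else 0) := by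
  have key : Matrix.trace (A ^ m)
      = ∑ a : Fin n, (Pi.single a (1:ℤ)) ⬝ᵥ ((A ^ m) *ᵥ Pi.single a 1) := by
    refine Finset.sum_congr rfl fun a _ => ?_
    simp [Matrix.mulVec, dotProduct, Pi.single_apply, mul_ite, ite_mul,
      Finset.sum_ite_eq, eq_comm]
  rw [key]
  simp only [← lin]
  rw [Finset.sum_comm]
  refine Finset.sum_congr rfl fun f _ => ?_
  rw [← Finset.mul_sum]
  congr 1
  simp [Pi.single_apply, Finset.sum_ite_eq, mul_ite, ite_mul, eq_comm]

lemma trace_card (m : ℕ) :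
    Matrix.trace (A ^ m)
      = ((Fintype.card {f : Fin (m+1) → Fin n //
          (∀ t : Fin m, G.Adj (f t.castSucc) (f t.succ)) ∧ f 0 = f (Fin.last m)}) : ℤ) := by
  rw [count, trace_eq]

lemma entry_sum_card (m : ℕ) :
    (∑ i, ∑ j, (A ^ m) i j)
      = ((Fintype.card {f : Fin (m+1) → Fin n //
          (∀ t : Fin m, G.Adj (f t.castSucc) (f t.succ)) ∧ True}) : ℤ) := by
  rw [count]
  have h := lin G m (fun _ => (1:ℤ)) (fun _ => (1:ℤ))
  simp only [if_true, mul_one] at h ⊢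
  rw [h]
  simp [dotProduct, Matrix.mulVec, Finset.mul_sum]


section Action
variable (N : ℕ) [NeZero N]

def W : Type := {w : ZMod N → Fin n // ∀ i, G.Adj (w i) (w (i+1))}

instance : Fintype (W G N) := Subtype.fintype _
instance : DecidableEq (W G N) := Subtype.instDecidableEq

def dSMul : DihedralGroup N → W G N → W G N
  | .r k, w => ⟨fun i => w.1 (i + k), fun i => by
      have h := w.2 (i + k)
      rwa [show i + k + 1 = i + 1 + k by ring] at h⟩
  | .sr k, w => ⟨fun i => w.1 (k - i), fun i => by
      have h := (w.2 (k - (i+1))).symm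
      rwa [show k - (i+1) + 1 = k - i by ring] at h⟩

instance : SMul (DihedralGroup N) (W G N) := ⟨dSMul G N⟩

@[simp] lemma r_smul (k : ZMod N) (w : W G N) (i : ZMod N) :
    ((DihedralGroup.r k • w : W G N)).1 i = w.1 (i + k) := rfl
@[simp] lemma sr_smul (k : ZMod N) (w : W G N) (i : ZMod N) :
    ((DihedralGroup.sr k • w : W G N)).1 i = w.1 (k - i) := rfl

instance : MulAction (DihedralGroup N) (W G N) where
  one_smul w := Subtype.ext (funext fun i => by
    show w.1 (i + 0) = w.1 i
    rw [add_zero])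
  mul_smul a b w := by
    rcases a with k | k <;> rcases b with l | l <;>
      simp only [DihedralGroup.r_mul_r, DihedralGroup.r_mul_sr, DihedralGroup.sr_mul_r,
        DihedralGroup.sr_mul_sr] <;>
      exact Subtype.ext (funext fun i => congrArg w.1 (by ring))

lemma mem_fixedBy_r (k : ZMod N) (w : W G N) :
    w ∈ MulAction.fixedBy (W G N) (DihedralGroup.r k) ↔ ∀ i, w.1 (i + k) = w.1 i := by
  rw [MulAction.mem_fixedBy]
  constructor
  · intro h i; exact congrFun (congrArg Subtype.val h) i
  · intro h; exact Subtype.ext (funext h)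

lemma mem_fixedBy_sr (k : ZMod N) (w : W G N) :
    w ∈ MulAction.fixedBy (W G N) (DihedralGroup.sr k) ↔ ∀ i, w.1 (k - i) = w.1 i := by
  rw [MulAction.mem_fixedBy]
  constructor
  · intro h i; exact congrFun (congrArg Subtype.val h) i
  · intro h; exact Subtype.ext (funext h)

lemma per_nat (w : ZMod N → Fin n) (c : ZMod N) (h : ∀ i, w (i + c) = w i) :
    ∀ (m : ℕ) (i : ZMod N), w (i + (m : ZMod N) * c) = w i := by
  intro m
  induction m with
  | zero => intro i; simp
  | succ m ih =>
    intro i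
    have : i + ((m+1 : ℕ) : ZMod N) * c = (i + c) + (m : ZMod N) * c := by push_cast; ring
    rw [this, ih (i + c), h i]

lemma per_gcd (k : ZMod N) (w : ZMod N → Fin n) (h : ∀ i, w (i + k) = w i) :
    ∀ i, w (i + ((N.gcd k.val : ℕ) : ZMod N)) = w i := by
  intro i
  have hb := congrArg (Int.cast : ℤ → ZMod N) (Nat.gcd_eq_gcd_ab N k.val)
  push_cast at hb
  rw [ZMod.natCast_self, zero_mul, zero_add, ZMod.natCast_val, ZMod.cast_id] at hb
  set x : ZMod N := ((N.gcdB k.val : ℤ) : ZMod N) with hx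
  have hx2 : x = ((x.val : ℕ) : ZMod N) := by rw [ZMod.natCast_val, ZMod.cast_id]
  rw [hb, hx2, mul_comm]
  exact per_nat N w k h x.val i

lemma per_mul (w : ZMod N → Fin n) (g : ℕ) (h : ∀ i, w (i + (g : ZMod N)) = w i) :
    ∀ (m : ℕ) (i : ZMod N), w (i + ((m * g : ℕ) : ZMod N)) = w i := by
  intro m i
  have : ((m * g : ℕ) : ZMod N) = (m : ZMod N) * (g : ZMod N) := by push_cast; ring
  rw [this]
  exact per_nat N w _ h m i


lemma gcd_pos (k : ZMod N) : 0 < N.gcd k.val :=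
  Nat.gcd_pos_of_pos_left _ (Nat.pos_of_ne_zero (NeZero.ne N))

def rotEquiv (k : ZMod N) :
    (MulAction.fixedBy (W G N) (DihedralGroup.r k)) ≃
      {f : Fin (N.gcd k.val + 1) → Fin n //
        (∀ t : Fin (N.gcd k.val), G.Adj (f t.castSucc) (f t.succ)) ∧
          f 0 = f (Fin.last (N.gcd k.val))} where
  toFun p := ⟨fun t => p.1.1 ((t.val : ℕ) : ZMod N), by
    constructor
    · intro t
      have h := p.1.2 ((t.val : ℕ) : ZMod N)
      simp only [Fin.coe_castSucc, Fin.val_succ, Nat.cast_add, Nat.cast_one]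
      exact h
    · have hfix := (mem_fixedBy_r G N k p.1).mp p.2
      have h := per_gcd N k p.1.1 hfix 0
      rw [zero_add] at h
      simp only [Fin.val_zero, Nat.cast_zero, Fin.val_last]
      exact h.symm⟩
  invFun q := ⟨⟨fun i => q.1 ⟨i.val % N.gcd k.val,
      Nat.lt_succ_of_lt (Nat.mod_lt _ (gcd_pos N k))⟩, by
    intro i
    have hg0 : 0 < N.gcd k.val := gcd_pos N k
    have hgN : N.gcd k.val ∣ N := Nat.gcd_dvd_left _ _
    have hal : i.val % N.gcd k.val < N.gcd k.val := Nat.mod_lt _ hg0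
    have hv : (i+1).val % N.gcd k.val = (i.val % N.gcd k.val + 1) % N.gcd k.val := by
      have h1 : i + 1 = ((i.val + 1 : ℕ) : ZMod N) := by
        rw [Nat.cast_add, Nat.cast_one, ZMod.natCast_val, ZMod.cast_id]
      rw [h1, ZMod.val_natCast, Nat.mod_mod_of_dvd _ hgN]
      exact (Nat.mod_modEq i.val _).symm.add_right 1
    have e1 : (⟨i.val % N.gcd k.val, Nat.lt_succ_of_lt hal⟩ : Fin (N.gcd k.val + 1))
        = (⟨i.val % N.gcd k.val, hal⟩ : Fin (N.gcd k.val)).castSucc := rfl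
    show G.Adj (q.1 ⟨i.val % N.gcd k.val, Nat.lt_succ_of_lt hal⟩)
      (q.1 ⟨(i+1).val % N.gcd k.val, Nat.lt_succ_of_lt (Nat.mod_lt _ hg0)⟩)
    rcases Nat.lt_or_ge (i.val % N.gcd k.val + 1) (N.gcd k.val) with hlt | hge
    · have e2 : (⟨(i+1).val % N.gcd k.val, Nat.lt_succ_of_lt (Nat.mod_lt _ hg0)⟩ :
          Fin (N.gcd k.val + 1)) = (⟨i.val % N.gcd k.val, hal⟩ : Fin (N.gcd k.val)).succ :=
        Fin.ext (by simp [hv, Nat.mod_eq_of_lt hlt])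
      rw [e1, e2]
      exact q.2.1 _
    · have heq : i.val % N.gcd k.val + 1 = N.gcd k.val := le_antisymm hal hge
      have e2 : (⟨(i+1).val % N.gcd k.val, Nat.lt_succ_of_lt (Nat.mod_lt _ hg0)⟩ :
          Fin (N.gcd k.val + 1)) = (0 : Fin (N.gcd k.val + 1)) :=
        Fin.ext (by simp [hv, heq])
      have e3 : (⟨i.val % N.gcd k.val, hal⟩ : Fin (N.gcd k.val)).succ
          = Fin.last (N.gcd k.val) := Fin.ext (by simp [heq])
      rw [e1, e2, q.2.2]
      have h4 := q.2.1 ⟨i.val % N.gcd k.val, hal⟩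
      rw [e3] at h4
      exact h4⟩, by
    apply (mem_fixedBy_r G N k _).mpr
    intro i
    apply congrArg q.1
    apply Fin.ext
    show (i + k).val % N.gcd k.val = i.val % N.gcd k.val
    have hgk : N.gcd k.val ∣ k.val := Nat.gcd_dvd_right _ _
    rw [ZMod.val_add, Nat.mod_mod_of_dvd _ (Nat.gcd_dvd_left _ _)]
    calc (i.val + k.val) % N.gcd k.val
        = (i.val + 0) % N.gcd k.val :=
          Nat.ModEq.add_left i.val ((Nat.modEq_zero_iff_dvd).mpr hgk)
      _ = i.val % N.gcd k.val := by rw [add_zero]⟩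
  left_inv p := by
    apply Subtype.ext; apply Subtype.ext; funext i
    show p.1.1 (((i.val % N.gcd k.val : ℕ) : ZMod N)) = p.1.1 i
    have hfix := (mem_fixedBy_r G N k p.1).mp p.2
    have hper := per_mul N p.1.1 (N.gcd k.val) (per_gcd N k p.1.1 hfix)
    have hi : i = ((i.val % N.gcd k.val : ℕ) : ZMod N)
        + (((i.val / N.gcd k.val) * N.gcd k.val : ℕ) : ZMod N) := by
      rw [← Nat.cast_add, Nat.mod_add_div' i.val _, ZMod.natCast_val, ZMod.cast_id]
    conv_rhs => rw [hi]
    rw [hper (i.val / N.gcd k.val)]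
  right_inv q := by
    apply Subtype.ext; funext t
    have hg0 : 0 < N.gcd k.val := gcd_pos N k
    show q.1 ⟨(((t.val : ℕ) : ZMod N)).val % N.gcd k.val,
        Nat.lt_succ_of_lt (Nat.mod_lt _ hg0)⟩ = q.1 t
    have hv : (((t.val : ℕ) : ZMod N)).val % N.gcd k.val = t.val % N.gcd k.val := by
      rw [ZMod.val_natCast, Nat.mod_mod_of_dvd _ (Nat.gcd_dvd_left _ _)]
    rcases Nat.lt_or_ge t.val (N.gcd k.val) with hlt | hge
    · exact congrArg q.1 (Fin.ext (by
        show ((t.val : ℕ) : ZMod N).val % N.gcd k.val = t.val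
        rw [hv, Nat.mod_eq_of_lt hlt]))
    · have heq : t.val = N.gcd k.val := le_antisymm (Nat.lt_succ_iff.mp t.2) hge
      have h0 : (⟨(((t.val : ℕ) : ZMod N)).val % N.gcd k.val,
          Nat.lt_succ_of_lt (Nat.mod_lt _ hg0)⟩ : Fin (N.gcd k.val + 1))
          = (0 : Fin (N.gcd k.val + 1)) := Fin.ext (by
            show ((t.val : ℕ) : ZMod N).val % N.gcd k.val = 0
            rw [hv, heq, Nat.mod_self])
      have hlast : t = Fin.last (N.gcd k.val) := Fin.ext (by simp [heq])
      rw [h0, hlast, q.2.2]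

lemma card_fixedBy_r (k : ZMod N) :
    ((Nat.card (MulAction.fixedBy (W G N) (DihedralGroup.r k))) : ℤ)
      = Matrix.trace (A ^ (N.gcd k.val)) := by
  rw [Nat.card_congr (rotEquiv G N k), Nat.card_eq_fintype_card]
  rw [trace_card]


lemma card_fixedBy_sr_odd (k : ZMod N) (hk : ¬ Even k.val) :
    Nat.card (MulAction.fixedBy (W G N) (DihedralGroup.sr k)) = 0 := by
  have : IsEmpty (MulAction.fixedBy (W G N) (DihedralGroup.sr k)) := by
    rw [isEmpty_subtype]
    intro w hw
    obtain ⟨m, hm⟩ := Nat.not_even_iff_odd.mp hk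
    have hkc : k = 2 * (m : ZMod N) + 1 := by
      have h0 : k = ((k.val : ℕ) : ZMod N) := by rw [ZMod.natCast_val, ZMod.cast_id]
      rw [h0, hm]; push_cast; ring
    have hfix := (mem_fixedBy_sr G N k w).mp hw
    have h1 := hfix (m : ZMod N)
    rw [show k - (m : ZMod N) = (m : ZMod N) + 1 by rw [hkc]; ring] at h1
    have h2 := w.2 (m : ZMod N)
    rw [h1] at h2
    exact G.irrefl h2
  exact Nat.card_of_isEmpty

section Reflect

lemma idx_bound (H : ℕ) (hH : N = 2 * H) (v : ℕ) (hv : v < N) : min v (N - v) < H + 1 := by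
  omega

lemma adj_min (H : ℕ) (f : Fin (H+1) → Fin n)
    (hadj : ∀ t : Fin H, G.Adj (f t.castSucc) (f t.succ))
    (a b : ℕ) (ha : a < H+1) (hb : b < H+1) (hab : b = a + 1 ∨ a = b + 1) :
    G.Adj (f ⟨a, ha⟩) (f ⟨b, hb⟩) := by
  rcases hab with h | h
  · subst h
    exact hadj ⟨a, by omega⟩
  · subst h
    exact (hadj ⟨b, by omega⟩).symm

def refEquiv (H : ℕ) (hH : N = 2 * H) (hH0 : 0 < H) (k : ZMod N) (m : ℕ) (hm : k.val = 2 * m) :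
    (MulAction.fixedBy (W G N) (DihedralGroup.sr k)) ≃
      {f : Fin (H+1) → Fin n //
        (∀ t : Fin H, G.Adj (f t.castSucc) (f t.succ)) ∧ True} where
  toFun w := ⟨fun t => w.1.1 ((m : ZMod N) + ((t.val : ℕ) : ZMod N)), by
    refine ⟨fun t => ?_, trivial⟩
    have h := w.1.2 ((m : ZMod N) + ((t.val : ℕ) : ZMod N))
    simp only [Fin.coe_castSucc, Fin.val_succ, Nat.cast_add, Nat.cast_one]
    rwa [add_assoc] at h⟩
  invFun f := ⟨⟨fun i => f.1 ⟨min (i - (m : ZMod N)).val (N - (i - (m : ZMod N)).val),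
      idx_bound N H hH (i - (m : ZMod N)).val (ZMod.val_lt _)⟩, by
    intro i
    have hvN : (i - (m : ZMod N)).val < N := ZMod.val_lt _
    have hv' : (i + 1 - (m : ZMod N)).val = ((i - (m : ZMod N)).val + 1) % N := by
      have h1 : i + 1 - (m : ZMod N) = (((i - (m : ZMod N)).val + 1 : ℕ) : ZMod N) := by
        push_cast
        rw [ZMod.natCast_val, ZMod.cast_id]
        ring
      rw [h1, ZMod.val_natCast]
    refine adj_min G H f.1 f.2.1 _ _ _ _ ?_
    rw [hv']
    rcases Nat.lt_or_ge ((i - (m : ZMod N)).val + 1) N with hvn | hvn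
    · rw [Nat.mod_eq_of_lt hvn]
      omega
    · have he : (i - (m : ZMod N)).val + 1 = N := by omega
      rw [he, Nat.mod_self]
      omega⟩, by
    apply (mem_fixedBy_sr G N k _).mpr
    intro i
    apply congrArg f.1
    apply Fin.ext
    show min (k - i - (m : ZMod N)).val (N - (k - i - (m : ZMod N)).val)
      = min (i - (m : ZMod N)).val (N - (i - (m : ZMod N)).val)
    have hkj : k = (m : ZMod N) + (m : ZMod N) := by
      have h0 : k = ((k.val : ℕ) : ZMod N) := by rw [ZMod.natCast_val, ZMod.cast_id]
      rw [h0, hm]; push_cast; ring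
    have hneg : k - i - (m : ZMod N) = -(i - (m : ZMod N)) := by rw [hkj]; ring
    rw [hneg, ZMod.neg_val]
    by_cases h0 : i - (m : ZMod N) = 0
    · simp [h0]
    · have hne : (i - (m : ZMod N)).val ≠ 0 := fun hc => h0 ((ZMod.val_eq_zero _).mp hc)
      have hvN : (i - (m : ZMod N)).val < N := ZMod.val_lt _
      rw [if_neg h0]
      omega⟩
  left_inv w := by
    apply Subtype.ext; apply Subtype.ext; funext i
    show w.1.1 ((m : ZMod N)
        + ((min (i - (m : ZMod N)).val (N - (i - (m : ZMod N)).val) : ℕ) : ZMod N)) = w.1.1 i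
    have hkj : k = (m : ZMod N) + (m : ZMod N) := by
      have h0 : k = ((k.val : ℕ) : ZMod N) := by rw [ZMod.natCast_val, ZMod.cast_id]
      rw [h0, hm]; push_cast; ring
    have hvN : (i - (m : ZMod N)).val < N := ZMod.val_lt _
    have hcv : (((i - (m : ZMod N)).val : ℕ) : ZMod N) = i - (m : ZMod N) := by
      rw [ZMod.natCast_val, ZMod.cast_id]
    rcases Nat.lt_or_ge H (i - (m : ZMod N)).val with hgt | hle
    · rw [show min (i - (m : ZMod N)).val (N - (i - (m : ZMod N)).val)
          = N - (i - (m : ZMod N)).val by omega]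
      have hidx : (m : ZMod N) + ((N - (i - (m : ZMod N)).val : ℕ) : ZMod N) = k - i := by
        rw [Nat.cast_sub hvN.le, ZMod.natCast_self, hcv, hkj]; ring
      rw [hidx]
      exact (mem_fixedBy_sr G N k w.1).mp w.2 i
    · rw [show min (i - (m : ZMod N)).val (N - (i - (m : ZMod N)).val)
          = (i - (m : ZMod N)).val by omega]
      rw [hcv]
      apply congrArg w.1.1
      ring
  right_inv f := by
    apply Subtype.ext; funext t
    show f.1 ⟨min ((m : ZMod N) + ((t.val : ℕ) : ZMod N) - (m : ZMod N)).val
        (N - ((m : ZMod N) + ((t.val : ℕ) : ZMod N) - (m : ZMod N)).val), _⟩ = f.1 t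
    apply congrArg f.1
    apply Fin.ext
    show min ((m : ZMod N) + ((t.val : ℕ) : ZMod N) - (m : ZMod N)).val
        (N - ((m : ZMod N) + ((t.val : ℕ) : ZMod N) - (m : ZMod N)).val) = t.val
    have h1 : (m : ZMod N) + ((t.val : ℕ) : ZMod N) - (m : ZMod N) = ((t.val : ℕ) : ZMod N) := by
      ring
    have h2 : t.val < H + 1 := t.2
    rw [h1, ZMod.val_natCast, Nat.mod_eq_of_lt (by omega)]
    omega

lemma card_fixedBy_sr_even (H : ℕ) (hH : N = 2 * H) (hH0 : 0 < H) (k : ZMod N) (hk : Even k.val) :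
    ((Nat.card (MulAction.fixedBy (W G N) (DihedralGroup.sr k))) : ℤ)
      = ∑ i, ∑ j, (A ^ H) i j := by
  obtain ⟨m, hm⟩ := hk
  rw [Nat.card_congr (refEquiv G N H hH hH0 k m (by omega)),
    Nat.card_eq_fintype_card, entry_sum_card]

end Reflect

lemma rot_sum :
    (∑ k : ZMod N, Matrix.trace (A ^ (N.gcd k.val)))
      = ∑ d ∈ N.divisors, (Nat.totient (N / d) : ℤ) * Matrix.trace (A ^ d) := by
  have hN0 : N ≠ 0 := NeZero.ne N
  have h1 : ∀ k : ZMod N, N.gcd k.val = N / addOrderOf k := by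
    intro k
    have h := ZMod.addOrderOf_coe k.val hN0
    rw [ZMod.natCast_rightInverse k] at h
    rw [h, Nat.div_div_self (Nat.gcd_dvd_left _ _) hN0]
  calc ∑ k : ZMod N, Matrix.trace (A ^ (N.gcd k.val))
      = ∑ k : ZMod N, Matrix.trace (A ^ (N / addOrderOf k)) :=
        Finset.sum_congr rfl fun k _ => by rw [h1 k]
    _ = ∑ d ∈ N.divisors, ∑ k ∈ Finset.univ.filter (fun k : ZMod N => addOrderOf k = d),
          Matrix.trace (A ^ (N / addOrderOf k)) := by
        rw [Finset.sum_fiberwise_of_maps_to]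
        intro k _
        rw [Nat.mem_divisors]
        refine ⟨?_, hN0⟩
        have hh := addOrderOf_dvd_card (x := k)
        rwa [ZMod.card] at hh
    _ = ∑ d ∈ N.divisors, (Nat.totient d : ℤ) * Matrix.trace (A ^ (N / d)) := by
        refine Finset.sum_congr rfl fun d hd => ?_
        rw [Finset.sum_congr rfl
          (fun k hk => by rw [(Finset.mem_filter.mp hk).2] :
            ∀ k ∈ Finset.univ.filter (fun k : ZMod N => addOrderOf k = d),
              Matrix.trace (A ^ (N / addOrderOf k)) = Matrix.trace (A ^ (N / d)))]
        rw [Finset.sum_const, nsmul_eq_mul]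
        congr 1
        have hcard := IsAddCyclic.card_addOrderOf_eq_totient (α := ZMod N)
          (d := d) (by rw [ZMod.card]; exact (Nat.mem_divisors.mp hd).1)
        rw [hcard]
    _ = ∑ d ∈ N.divisors, (Nat.totient (N/d) : ℤ) * Matrix.trace (A ^ d) := by
        have key := Nat.sum_div_divisors (α := ℤ) N
          (fun d => (Nat.totient (N / d) : ℤ) * Matrix.trace (A ^ d))
        rw [← key]
        refine Finset.sum_congr rfl fun d hd => ?_
        rw [Nat.div_div_self (Nat.mem_divisors.mp hd).1 hN0]

lemma even_count (H : ℕ) :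
    ∑ x ∈ Finset.range (2*H), (if Even x then (1:ℤ) else 0) = H := by
  induction H with
  | zero => simp
  | succ H ih =>
    rw [show 2*(H+1) = (2*H+1)+1 by ring, Finset.sum_range_succ, Finset.sum_range_succ, ih]
    have h1 : ¬ Even (2*H+1) := by simp [Nat.even_add_one]
    have h2 : Even (2*H) := even_two_mul H
    rw [if_neg h1, if_pos h2]
    push_cast; ring

def valEquiv : ZMod N ≃ Fin N where
  toFun k := ⟨k.val, ZMod.val_lt k⟩
  invFun t := ((t.val : ℕ) : ZMod N)
  left_inv k := ZMod.natCast_rightInverse k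
  right_inv t := Fin.ext (by
    show (((t.val : ℕ) : ZMod N)).val = t.val
    rw [ZMod.val_natCast, Nat.mod_eq_of_lt t.2])

lemma val_sum (F : ℕ → ℤ) : ∑ k : ZMod N, F k.val = ∑ x ∈ Finset.range N, F x := by
  calc ∑ k : ZMod N, F k.val = ∑ t : Fin N, F t.val :=
        Fintype.sum_equiv (valEquiv N) _ _ (fun k => rfl)
    _ = ∑ x ∈ Finset.range N, F x := Fin.sum_univ_eq_sum_range _ N

lemma ref_sum (H : ℕ) (hH : N = 2 * H) (hH0 : 0 < H) :
    ∑ k : ZMod N, ((Nat.card (MulAction.fixedBy (W G N) (DihedralGroup.sr k))) : ℤ)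
      = (H : ℤ) * ∑ i, ∑ j, (A ^ H) i j := by
  have hterm : ∀ k : ZMod N,
      ((Nat.card (MulAction.fixedBy (W G N) (DihedralGroup.sr k))) : ℤ)
        = (if Even k.val then (1:ℤ) else 0) * ∑ i, ∑ j, (A ^ H) i j := by
    intro k
    by_cases hk : Even k.val
    · rw [card_fixedBy_sr_even G N H hH hH0 k hk, if_pos hk, one_mul]
    · rw [card_fixedBy_sr_odd G N k hk, if_neg hk, zero_mul, Nat.cast_zero]
  rw [Finset.sum_congr rfl fun k _ => hterm k, ← Finset.sum_mul]
  congr 1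
  rw [val_sum N (fun x => if Even x then (1:ℤ) else 0), hH, even_count]

end Action
end Stmt5Aux

theorem stmt_5 (n : ℕ) (G : SimpleGraph (Fin n)) [DecidableRel G.Adj]
    (N : ℕ) (hN : 4 ≤ N) (heven : Even N) :
    (2 * (N : ℤ)) ∣
      (∑ d ∈ N.divisors, (Nat.totient (N / d) : ℤ) * Matrix.trace (G.adjMatrix ℤ ^ d)) +
        (N / 2 : ℕ) * ∑ i, ∑ j, (G.adjMatrix ℤ ^ (N / 2)) i j := by
  haveI : NeZero N := ⟨by omega⟩
  classical
  letI : ∀ a : DihedralGroup N, Fintype (MulAction.fixedBy (Stmt5Aux.W G N) a) :=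
    fun a => Fintype.ofFinite _
  letI : Fintype (Quotient (MulAction.orbitRel (DihedralGroup N) (Stmt5Aux.W G N))) :=
    Fintype.ofFinite _
  have burnside := MulAction.sum_card_fixedBy_eq_card_orbits_mul_card_group
    (DihedralGroup N) (Stmt5Aux.W G N)
  have hdvd : (2 * (N:ℤ)) ∣
      (∑ a : DihedralGroup N, (Fintype.card (MulAction.fixedBy (Stmt5Aux.W G N) a) : ℤ)) := by
    refine ⟨(Fintype.card
      (Quotient (MulAction.orbitRel (DihedralGroup N) (Stmt5Aux.W G N))) : ℤ), ?_⟩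
    have hc := congrArg (Nat.cast : ℕ → ℤ) burnside
    push_cast at hc
    rw [hc, DihedralGroup.card]
    push_cast
    ring
  let e : ZMod N ⊕ ZMod N ≃ DihedralGroup N :=
    ⟨Sum.elim DihedralGroup.r DihedralGroup.sr,
     fun g => match g with | .r k => .inl k | .sr k => .inr k,
     by rintro (k|k) <;> rfl, by rintro (k|k) <;> rfl⟩
  have hsplit : (∑ a : DihedralGroup N,
      (Fintype.card (MulAction.fixedBy (Stmt5Aux.W G N) a) : ℤ))
      = (∑ k : ZMod N,
          (Fintype.card (MulAction.fixedBy (Stmt5Aux.W G N) (DihedralGroup.r k)) : ℤ))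
        + ∑ k : ZMod N,
          (Fintype.card (MulAction.fixedBy (Stmt5Aux.W G N) (DihedralGroup.sr k)) : ℤ) := by
    rw [← Equiv.sum_comp e
      (fun a => (Fintype.card (MulAction.fixedBy (Stmt5Aux.W G N) a) : ℤ)),
      Fintype.sum_sum_type]
    rfl
  have h2 : N % 2 = 0 := Nat.even_iff.mp heven
  have hH : N = 2 * (N / 2) := by omega
  have hH0 : 0 < N / 2 := by omega
  have hrot : (∑ k : ZMod N,
      (Fintype.card (MulAction.fixedBy (Stmt5Aux.W G N) (DihedralGroup.r k)) : ℤ))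
      = ∑ d ∈ N.divisors, (Nat.totient (N / d) : ℤ) * Matrix.trace (G.adjMatrix ℤ ^ d) := by
    rw [← Stmt5Aux.rot_sum G N]
    refine Finset.sum_congr rfl fun k _ => ?_
    rw [← Nat.card_eq_fintype_card]
    exact Stmt5Aux.card_fixedBy_r G N k
  have href : (∑ k : ZMod N,
      (Fintype.card (MulAction.fixedBy (Stmt5Aux.W G N) (DihedralGroup.sr k)) : ℤ))
      = ((N / 2 : ℕ) : ℤ) * ∑ i, ∑ j, (G.adjMatrix ℤ ^ (N / 2)) i j := by
    rw [← Stmt5Aux.ref_sum G N (N / 2) hH hH0]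
    refine Finset.sum_congr rfl fun k _ => ?_
    rw [← Nat.card_eq_fintype_card]
  rw [hsplit, hrot, href] at hdvd
  exact hdvd
end

section
/- Let A be an n×n matrix, and write χ_{J−2A}(x) = Σ_{i=0}^n a_i x^{n−i} and χ_A(x) = Σ_{i=0}^n b_i x^{n−i}, where J is the all-ones matrix. Then for each r, a_r = (−2)^r ( b_r + (1/2) Σ_{i=1}^r b_{r−i} · 1ᵀ A^{i−1} 1 ). -/
open Polynomial Matrix Finset

private lemma coeff_comp_C_mul_X (p : ℚ[X]) (c : ℚ) (m : ℕ) :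
    (p.comp (C c * X)).coeff m = c ^ m * p.coeff m := by
  rw [comp_eq_sum_left, Polynomial.coeff_sum, Polynomial.sum]
  have h : ∀ e ∈ p.support, (Polynomial.C (p.coeff e) * (Polynomial.C c * X) ^ e).coeff m
      = if m = e then p.coeff e * c ^ e else 0 := by
    intro e _
    rw [mul_pow, ← C_pow, ← mul_assoc, ← C_mul, coeff_C_mul, coeff_X_pow]
    split_ifs <;> ring
  rw [Finset.sum_congr rfl h, Finset.sum_ite_eq]
  by_cases hm : m ∈ p.support
  · rw [if_pos hm]; ring
  · rw [if_neg hm, Polynomial.notMem_support_iff.mp hm, mul_zero]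

private lemma mpe_smul_map {n : ℕ} (k : ℕ) (M : Matrix (Fin n) (Fin n) ℚ) :
    matPolyEquiv ((X : ℚ[X]) ^ k • M.map C) = Polynomial.C M * X ^ k := by
  ext m i j
  rw [matPolyEquiv_coeff_apply]
  simp only [Matrix.smul_apply, Matrix.map_apply, smul_eq_mul, mul_comm, coeff_C_mul,
    coeff_X_pow, Polynomial.coeff_C_mul]
  rw [mul_comm, coeff_C_mul, coeff_X_pow]
  split_ifs <;> simp

noncomputable def auxP {n : ℕ} (A : Matrix (Fin n) (Fin n) ℚ) (k : ℕ) :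
    Matrix (Fin n) (Fin n) ℚ :=
  ∑ j ∈ Finset.range (n - k), A.charpoly.coeff (k + 1 + j) • A ^ j

noncomputable def auxN {n : ℕ} (A : Matrix (Fin n) (Fin n) ℚ) :
    Matrix (Fin n) (Fin n) ℚ[X] :=
  ∑ k ∈ Finset.range n, (X : ℚ[X]) ^ k • (auxP A k).map C

private lemma auxP_zero {n : ℕ} (A : Matrix (Fin n) (Fin n) ℚ) {k : ℕ} (h : n ≤ k) :
    auxP A k = 0 := by
  simp [auxP, Nat.sub_eq_zero_of_le h]

private lemma charpoly_coeff_hi {n : ℕ} (A : Matrix (Fin n) (Fin n) ℚ) {k : ℕ} (h : n < k) :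
    A.charpoly.coeff k = 0 := by
  apply Polynomial.coeff_eq_zero_of_natDegree_lt
  rwa [Matrix.charpoly_natDegree_eq_dim, Fintype.card_fin]

private lemma mul_auxP {n : ℕ} (A : Matrix (Fin n) (Fin n) ℚ) (k : ℕ) :
    A * auxP A k = ∑ j ∈ Finset.range (n - k), A.charpoly.coeff (k + 1 + j) • A ^ (j + 1) := by
  rw [auxP, Finset.mul_sum]
  exact Finset.sum_congr rfl fun j _ => by rw [mul_smul_comm, ← pow_succ']

private lemma auxP_rec {n : ℕ} (A : Matrix (Fin n) (Fin n) ℚ) (k : ℕ) :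
    auxP A k = A.charpoly.coeff (k + 1) • 1 + A * auxP A (k + 1) := by
  by_cases hk : k < n
  · have h1 : n - k = (n - (k + 1)) + 1 := by omega
    rw [mul_auxP, auxP, h1, Finset.sum_range_succ', add_comm]
    congr 1
    · refine Finset.sum_congr rfl fun j _ => ?_
      congr 2
      omega
  · rw [auxP_zero A (by omega), auxP_zero A (by omega),
      charpoly_coeff_hi A (by omega)]
    simp

private lemma ch_sum {n : ℕ} (A : Matrix (Fin n) (Fin n) ℚ) :
    ∑ m ∈ Finset.range (n + 1), A.charpoly.coeff m • A ^ m = 0 := by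
  have h := Matrix.aeval_self_charpoly A
  rwa [Polynomial.aeval_eq_sum_range, Matrix.charpoly_natDegree_eq_dim, Fintype.card_fin] at h

private lemma auxP_base {n : ℕ} (A : Matrix (Fin n) (Fin n) ℚ) :
    A.charpoly.coeff 0 • 1 + A * auxP A 0 = 0 := by
  have h := ch_sum A
  rw [Finset.sum_range_succ'] at h
  rw [mul_auxP, ← h, add_comm]
  congr 1
  · refine Finset.sum_congr rfl fun j _ => ?_
    congr 2
    omega

private lemma qcoeff {n : ℕ} (A : Matrix (Fin n) (Fin n) ℚ) (m : ℕ) :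
    (∑ k ∈ Finset.range n, Polynomial.C (auxP A k) * X ^ k).coeff m = auxP A m := by
  rw [Polynomial.finset_sum_coeff]
  simp only [coeff_C_mul, coeff_X_pow, mul_ite, mul_one, mul_zero, Finset.sum_ite_eq]
  by_cases hm : m ∈ Finset.range n
  · rw [if_pos hm]
  · rw [if_neg hm, auxP_zero A (by simpa using hm)]

private lemma key1 {n : ℕ} (A : Matrix (Fin n) (Fin n) ℚ) :
    charmatrix A * auxN A = A.charpoly • (1 : Matrix (Fin n) (Fin n) ℚ[X]) := by
  apply matPolyEquiv.injective
  rw [_root_.map_mul, matPolyEquiv_charmatrix, matPolyEquiv_smul_one, auxN, map_sum]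
  simp only [mpe_smul_map]
  refine Polynomial.ext fun m => ?_
  rw [Polynomial.coeff_map, Algebra.algebraMap_eq_smul_one, sub_mul, Polynomial.coeff_sub,
    coeff_C_mul]
  cases m with
  | zero =>
    rw [Polynomial.mul_coeff_zero, Polynomial.coeff_X_zero, zero_mul, qcoeff]
    rw [zero_sub]
    exact (eq_neg_of_add_eq_zero_left (auxP_base A)).symm
  | succ m =>
    rw [Polynomial.coeff_X_mul, qcoeff, qcoeff]
    rw [auxP_rec A m]
    simp

private lemma adj_charmatrix {n : ℕ} (A : Matrix (Fin n) (Fin n) ℚ) :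
    adjugate (charmatrix A) = auxN A := by
  have hdet : (charmatrix A).det = A.charpoly := rfl
  have h2 : A.charpoly • auxN A = A.charpoly • adjugate (charmatrix A) := by
    calc A.charpoly • auxN A
        = ((charmatrix A).det • (1 : Matrix (Fin n) (Fin n) ℚ[X])) * auxN A := by
          rw [hdet, smul_mul_assoc, one_mul]
      _ = adjugate (charmatrix A) * (charmatrix A * auxN A) := by
          rw [← Matrix.mul_assoc, Matrix.adjugate_mul]
      _ = A.charpoly • adjugate (charmatrix A) := by
          rw [key1, Matrix.mul_smul, Matrix.mul_one]
  exact (smul_right_injective _ (Matrix.charpoly_monic A).ne_zero h2).symm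

private lemma det_lemma_field {K : Type*} [Field K] {m : Type*} [Fintype m] [DecidableEq m]
    (M : Matrix m m K) (hM : M.det ≠ 0) (u v : m → K) :
    (M + replicateCol Unit u * replicateRow Unit v).det = M.det + v ⬝ᵥ (adjugate M) *ᵥ u := by
  rw [Matrix.det_add_replicateCol_mul_replicateRow (isUnit_iff_ne_zero.mpr hM),
    Matrix.det_unique (A := 1 + replicateRow Unit v * M⁻¹ * replicateCol Unit u)]
  have h1 : ((1 + replicateRow Unit v * M⁻¹ * replicateCol Unit u : Matrix Unit Unit K)) default default
      = 1 + v ⬝ᵥ (M⁻¹ *ᵥ u) := by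
    simp [Matrix.add_apply, Matrix.mul_apply, Matrix.mulVec, dotProduct,
      Finset.mul_sum, Finset.sum_mul, mul_assoc]
    rw [Finset.sum_comm]
  rw [h1, Matrix.inv_def, Matrix.smul_mulVec, dotProduct_smul,
    Ring.inverse_eq_inv, smul_eq_mul]
  field_simp

private lemma det_lemma_poly {m : Type*} [Fintype m] [DecidableEq m]
    (M : Matrix m m ℚ[X]) (hM : M.det ≠ 0) (u v : m → ℚ[X]) :
    (M + replicateCol Unit u * replicateRow Unit v).det = M.det + v ⬝ᵥ (adjugate M) *ᵥ u := by
  let F := FractionRing ℚ[X]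
  let φ : ℚ[X] →+* F := algebraMap _ _
  have hinj : Function.Injective φ := IsFractionRing.injective _ _
  apply hinj
  have hmap : (M + replicateCol Unit u * replicateRow Unit v).map φ
      = M.map φ + replicateCol Unit (φ ∘ u) * replicateRow Unit (φ ∘ v) := by
    ext i j
    simp [Matrix.mul_apply, Matrix.map_apply, Matrix.add_apply]
  have e1 : (M.map ⇑φ).det = φ M.det := (RingHom.map_det φ M).symm
  have e2 : adjugate (M.map ⇑φ) = (adjugate M).map ⇑φ := (RingHom.map_adjugate φ M).symm
  have hdet : (M.map φ).det ≠ 0 := by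
    rw [e1]
    exact fun h => hM (hinj (by simpa using h))
  calc φ ((M + replicateCol Unit u * replicateRow Unit v).det)
      = ((M + replicateCol Unit u * replicateRow Unit v).map φ).det := RingHom.map_det φ _
    _ = (M.map φ).det + (φ ∘ v) ⬝ᵥ (adjugate (M.map φ)) *ᵥ (φ ∘ u) := by
        rw [hmap, det_lemma_field _ hdet]
    _ = φ (M.det + v ⬝ᵥ (adjugate M) *ᵥ u) := by
        rw [e1, e2]
        simp [dotProduct, Matrix.mulVec, map_sum, _root_.map_mul, Function.comp]

noncomputable def auxG {n : ℕ} (A : Matrix (Fin n) (Fin n) ℚ) : Matrix (Fin n) (Fin n) ℚ[X] :=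
  charmatrix A + replicateCol Unit (fun _ => (1 : ℚ[X])) * replicateRow Unit (fun _ => Polynomial.C (1/2 : ℚ))

private lemma neg_two_C : (-2 : ℚ[X]) = Polynomial.C (-2 : ℚ) := by
  rw [_root_.map_neg, map_ofNat]

private lemma factor {n : ℕ} (A J : Matrix (Fin n) (Fin n) ℚ)
    (hJ : J = Matrix.of fun _ _ => (1 : ℚ)) :
    (J - 2 • A).charpoly
      = Polynomial.C ((-2 : ℚ)) ^ n * ((auxG A).det.comp (Polynomial.C (-1/2 : ℚ) * X)) := by
  have h1 : (-2 : ℚ[X]) * Polynomial.C (-1/2 : ℚ) = 1 := by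
    rw [neg_two_C, ← _root_.map_mul]; norm_num
  have h2 : (-2 : ℚ[X]) * Polynomial.C (1/2 : ℚ) = -1 := by
    rw [neg_two_C, ← _root_.map_mul]; norm_num
  have hmat : charmatrix (J - 2 • A)
      = (-2 : ℚ[X]) • ((auxG A).map (eval₂RingHom Polynomial.C (Polynomial.C (-1/2 : ℚ) * X))) := by
    refine Matrix.ext fun i j => ?_
    have hentry : (J - 2 • A) i j = 1 - (A i j + A i j) := by
      rw [two_smul]; simp [hJ]
    have hG : auxG A i j = (if i = j then (X : ℚ[X]) else 0) - Polynomial.C (A i j)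
        + Polynomial.C (1/2 : ℚ) := by
      simp [auxG, charmatrix_apply, Matrix.diagonal_apply, Matrix.mul_apply]
    rw [charmatrix_apply, Matrix.smul_apply, Matrix.map_apply, hG, hentry,
      Matrix.diagonal_apply]
    rw [coe_eval₂RingHom, eval₂_add, eval₂_sub, eval₂_C, eval₂_C]
    simp only [map_sub, map_add, Polynomial.C_1, smul_eq_mul]
    by_cases h : i = j
    · simp only [h, if_pos, ite_true, eval₂_X]
      linear_combination (-X : ℚ[X]) * h1 - h2
    · simp only [if_neg h, ite_false, eval₂_zero]
      linear_combination -h2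
  have hcomp : (eval₂RingHom Polynomial.C (Polynomial.C (-1/2 : ℚ) * X)) (auxG A).det
      = (auxG A).det.comp (Polynomial.C (-1/2 : ℚ) * X) := rfl
  rw [Matrix.charpoly, hmat, Matrix.det_smul, Fintype.card_fin, ← hcomp,
    RingHom.map_det, RingHom.mapMatrix_apply, neg_two_C]

private lemma wcoeff {n : ℕ} (A : Matrix (Fin n) (Fin n) ℚ) (m : ℕ) :
    (((fun _ => Polynomial.C (1/2 : ℚ)) : Fin n → ℚ[X]) ⬝ᵥ
        (auxN A) *ᵥ (fun _ => (1 : ℚ[X]))).coeff m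
      = (1/2 : ℚ) * ∑ t ∈ Finset.range (n - m),
          A.charpoly.coeff (m + 1 + t) * (∑ p, ∑ q, (A ^ t) p q) := by
  have hentry : ∀ i j : Fin n, (auxN A) i j
      = ∑ k ∈ Finset.range n, Polynomial.C ((auxP A k) i j) * (X : ℚ[X]) ^ k := by
    intro i j
    rw [auxN, Matrix.sum_apply]
    refine Finset.sum_congr rfl fun k _ => ?_
    rw [Matrix.smul_apply, Matrix.map_apply, smul_eq_mul, mul_comm]
  have hcoeff : ∀ i j : Fin n, ((auxN A) i j).coeff m = (auxP A m) i j := by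
    intro i j
    rw [hentry i j, Polynomial.finset_sum_coeff]
    simp only [coeff_C_mul, coeff_X_pow, mul_ite, mul_one, mul_zero,
      Finset.sum_ite_eq]
    by_cases hm : m ∈ Finset.range n
    · rw [if_pos hm]
    · rw [if_neg hm, auxP_zero A (by simpa using hm)]
      simp
  have hsum : ∑ i, ∑ j, (auxP A m) i j = ∑ t ∈ Finset.range (n - m),
      A.charpoly.coeff (m + 1 + t) * (∑ p, ∑ q, (A ^ t) p q) := by
    have h1 : ∀ i j : Fin n, (auxP A m) i j
        = ∑ t ∈ Finset.range (n - m), A.charpoly.coeff (m + 1 + t) * (A ^ t) i j := by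
      intro i j
      rw [auxP, Matrix.sum_apply]
      exact Finset.sum_congr rfl fun t _ => by simp [Matrix.smul_apply]
    simp only [h1]
    rw [Finset.sum_congr rfl fun i _ => Finset.sum_comm (γ := Fin n), Finset.sum_comm]
    exact Finset.sum_congr rfl fun t _ => by simp [← Finset.mul_sum]
  have hrow : ∀ i, ((auxN A) *ᵥ (fun _ => (1 : ℚ[X]))) i = ∑ j, (auxN A) i j := by
    intro i
    simp [Matrix.mulVec, dotProduct]
  have hw : (((fun _ => Polynomial.C (1/2 : ℚ)) : Fin n → ℚ[X]) ⬝ᵥ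
      (auxN A) *ᵥ (fun _ => (1 : ℚ[X])))
      = ∑ i, Polynomial.C (1/2 : ℚ) * ∑ j, (auxN A) i j := by
    simp [dotProduct, hrow]
  rw [hw, Polynomial.finset_sum_coeff]
  have hterm : ∀ i ∈ (Finset.univ : Finset (Fin n)),
      (Polynomial.C (1/2 : ℚ) * ∑ j, (auxN A) i j).coeff m
        = (1/2 : ℚ) * ∑ j, (auxP A m) i j := by
    intro i _
    rw [coeff_C_mul, Polynomial.finset_sum_coeff,
      Finset.sum_congr rfl fun j _ => hcoeff i j]
  rw [Finset.sum_congr rfl hterm, ← Finset.mul_sum, hsum]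

theorem stmt_7 (n : ℕ) (A : Matrix (Fin n) (Fin n) ℚ)
    (J : Matrix (Fin n) (Fin n) ℚ) (hJ : J = Matrix.of fun _ _ => (1 : ℚ))
    (a b : ℕ → ℚ)
    (ha : ∀ r ≤ n, a r = (J - 2 • A).charpoly.coeff (n - r))
    (hb : ∀ r ≤ n, b r = A.charpoly.coeff (n - r)) :
    ∀ r ≤ n, a r = (-2) ^ r *
      (b r + (1 / 2) * ∑ i ∈ Finset.Icc 1 r, b (r - i) * ∑ j, ∑ k, (A ^ (i - 1)) j k) := by
  intro r hr
  have hMdet : (charmatrix A).det ≠ 0 := by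
    have h : (charmatrix A).det = A.charpoly := rfl
    rw [h]
    exact (Matrix.charpoly_monic A).ne_zero
  have hg : (auxG A).det = A.charpoly
      + ((fun _ => Polynomial.C (1/2 : ℚ)) : Fin n → ℚ[X]) ⬝ᵥ
          (auxN A) *ᵥ (fun _ => (1 : ℚ[X])) := by
    rw [auxG, det_lemma_poly _ hMdet, adj_charmatrix]
    rfl
  have hgc : (auxG A).det.coeff (n - r)
      = b r + (1/2 : ℚ) * ∑ t ∈ Finset.range r,
          A.charpoly.coeff (n - r + 1 + t) * (∑ p, ∑ q, (A ^ t) p q) := by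
    rw [hg, Polynomial.coeff_add, wcoeff, hb r hr,
      show n - (n - r) = r from by omega]
  have hsum2 : ∑ t ∈ Finset.range r,
      A.charpoly.coeff (n - r + 1 + t) * (∑ p, ∑ q, (A ^ t) p q)
      = ∑ i ∈ Finset.Icc 1 r, b (r - i) * ∑ j, ∑ k, (A ^ (i - 1)) j k := by
    rw [← Finset.Ico_add_one_right_eq_Icc, Finset.sum_Ico_eq_sum_range,
      show r + 1 - 1 = r from rfl]
    refine Finset.sum_congr rfl fun t ht => ?_
    have ht' : t < r := Finset.mem_range.mp ht
    rw [hb (r - (1 + t)) (by omega)]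
    have e1 : n - (r - (1 + t)) = n - r + 1 + t := by omega
    have e2 : 1 + t - 1 = t := by omega
    rw [e1, e2]
  have hcoef : a r = (-2 : ℚ) ^ n * ((-1/2 : ℚ) ^ (n - r) * (auxG A).det.coeff (n - r)) := by
    rw [ha r hr, factor A J hJ, ← map_pow, coeff_C_mul, coeff_comp_C_mul_X]
  have hpow : (-2 : ℚ) ^ n * (-1/2 : ℚ) ^ (n - r) = (-2 : ℚ) ^ r := by
    have h1 : (-2 : ℚ) ^ n = (-2 : ℚ) ^ (n - r) * (-2 : ℚ) ^ r := by
      rw [← pow_add]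
      congr 1
      omega
    have h2 : (-2 : ℚ) ^ (n - r) * (-1/2 : ℚ) ^ (n - r) = 1 := by
      rw [← mul_pow]
      norm_num
    calc (-2 : ℚ) ^ n * (-1/2 : ℚ) ^ (n - r)
        = ((-2 : ℚ) ^ (n - r) * (-1/2 : ℚ) ^ (n - r)) * (-2 : ℚ) ^ r := by rw [h1]; ring
      _ = (-2 : ℚ) ^ r := by rw [h2, one_mul]
  rw [hcoef, hgc, hsum2, ← mul_assoc, hpow]
end

section
/- Let A be the adjacency matrix of a graph of even order n, and write χ_{J−2A}(x) = Σ_{i=0}^n a_i x^{n−i}. Then 2^r divides a_r for all r ∈ {0,…,n}. -/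
open Polynomial Matrix


private lemma det_eq_zero_of_odd_alt {R : Type*} [CommRing R] {m : ℕ} (hm : Odd m)
    (A : Matrix (Fin m) (Fin m) R) (h1 : Aᵀ = -A) (h2 : ∀ i, A i i = 0) : A.det = 0 := by
  classical
  set G : Matrix (Fin m) (Fin m) (MvPolynomial (Fin m × Fin m) ℤ) := Matrix.of fun i j =>
    if i < j then MvPolynomial.X (i, j) else if j < i then -MvPolynomial.X (j, i) else 0 with hG
  have hGt : Gᵀ = -G := by
    ext i j : 2
    rcases lt_trichotomy i j with h | h | h
    · simp [hG, h, h.not_gt, Matrix.transpose_apply, Matrix.neg_apply]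
    · subst h; simp [hG, lt_irrefl, Matrix.neg_apply]
    · simp [hG, h, h.not_gt, Matrix.transpose_apply, Matrix.neg_apply]
  have hdetG : G.det = 0 := by
    have hneg : G.det = -G.det := by
      conv_lhs => rw [← Matrix.det_transpose G, hGt]
      rw [Matrix.det_neg]
      simp [hm.neg_one_pow]
    have h2d : (2 : MvPolynomial (Fin m × Fin m) ℤ) * G.det = 0 := by linear_combination hneg
    rcases mul_eq_zero.mp h2d with h | h
    · exact absurd h two_ne_zero
    · exact h
  have hA : ∀ i j, A j i = -A i j := by
    intro i j
    have := congrFun (congrFun h1 i) j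
    simpa [Matrix.transpose_apply] using this
  have hmap : (MvPolynomial.eval₂Hom (Int.castRingHom R) (fun p => A p.1 p.2)).mapMatrix G = A := by
    ext i j : 2
    rcases lt_trichotomy i j with h | h | h
    · simp [hG, h, MvPolynomial.eval₂Hom_X']
    · subst h; simp [hG, lt_irrefl, h2]
    · simp [hG, h, h.not_gt, MvPolynomial.eval₂Hom_X', ← hA]
  calc A.det = ((MvPolynomial.eval₂Hom (Int.castRingHom R) (fun p => A p.1 p.2)).mapMatrix G).det := by
        rw [hmap]
  _ = (MvPolynomial.eval₂Hom (Int.castRingHom R) (fun p => A p.1 p.2)) G.det :=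
        (RingHom.map_det _ G).symm
  _ = 0 := by rw [hdetG]; exact map_zero _


private lemma coeff_comp_two (p : Polynomial ℤ) (k : ℕ) :
    (p.comp (C 2 * X)).coeff k = 2 ^ k * p.coeff k := by
  induction p using Polynomial.induction_on' with
  | add p q hp hq => rw [add_comp, coeff_add, hp, hq, coeff_add, mul_add]
  | monomial i a =>
    rw [monomial_comp, mul_pow, ← map_pow, ← mul_assoc, ← C_mul, coeff_C_mul, coeff_X_pow,
      coeff_monomial]
    rcases eq_or_ne i k with h | h
    · subst h; simp [mul_comm]
    · simp [h, h.symm]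

private lemma key_dvd {m : ℕ} (hm : Odd m) (B Jc : Matrix (Fin (m+1)) (Fin (m+1)) (Polynomial ℤ))
    (hBt : Bᵀ = B) (hd : ∀ i, B i i = X) (hJc : Jc = Matrix.of fun _ _ => 1) :
    (2 : Polynomial ℤ)^(m+1) ∣ ((2 : Polynomial ℤ) • B - Jc).det := by
  classical
  set L : Matrix (Fin (m+1)) (Fin (m+1)) (Polynomial ℤ) :=
    Matrix.of (fun i j => if i = 0 then 0 else if j = 0 then (1:Polynomial ℤ) else 0) with hL
  set U : Matrix (Fin (m+1)) (Fin (m+1)) (Polynomial ℤ) := 1 - L with hU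
  have hUdet : U.det = 1 := by
    rw [Matrix.det_of_lowerTriangular U ?_]
    · apply Finset.prod_eq_one
      intro i _
      rcases eq_or_ne i 0 with h | h <;> simp [hU, hL, Matrix.sub_apply, Matrix.one_apply, h]
    · intro i j hij
      have hij' : i < j := hij
      have hj : j ≠ 0 := Fin.pos_iff_ne_zero.mp (lt_of_le_of_lt (Fin.zero_le i) hij')
      simp [hU, hL, Matrix.sub_apply, Matrix.one_apply, hj, (ne_of_lt hij')]
  have hsum : ∀ i : Fin (m+1), (∑ k, U i k) = if i = 0 then 1 else 0 := by
    intro i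
    rcases eq_or_ne i 0 with h | h <;>
      simp [hU, hL, Matrix.sub_apply, Matrix.one_apply, h, Finset.sum_ite_eq,
        Finset.sum_ite_eq', Finset.sum_sub_distrib]
  have hJcU : U * Jc * Uᵀ = Matrix.of (fun i j => if i = 0 ∧ j = 0 then (1:Polynomial ℤ) else 0) := by
    have h1 : U * Jc = Matrix.of (fun i _ => if i = 0 then (1:Polynomial ℤ) else 0) := by
      ext i k : 1
      simp only [Matrix.mul_apply, hJc, Matrix.of_apply, mul_one]
      exact hsum i
    rw [h1]
    ext i j : 1
    simp only [Matrix.mul_apply, Matrix.of_apply, Matrix.transpose_apply, ite_mul, one_mul,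
      zero_mul]
    rcases eq_or_ne i 0 with h | h
    · simpa [h] using hsum j
    · simp [h]
  set B' : Matrix (Fin (m+1)) (Fin (m+1)) (Polynomial ℤ) := U * B * Uᵀ with hB'
  have hdet1 : ((2 : Polynomial ℤ) • B - Jc).det = (U * ((2 : Polynomial ℤ) • B - Jc) * Uᵀ).det := by
    rw [Matrix.det_mul, Matrix.det_mul, hUdet, Matrix.det_transpose, hUdet]
    ring
  have hW : U * ((2 : Polynomial ℤ) • B - Jc) * Uᵀ =
      (2 : Polynomial ℤ) • B' - Matrix.of (fun i j => if i = 0 ∧ j = 0 then (1:Polynomial ℤ) else 0) := by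
    rw [Matrix.mul_sub, Matrix.sub_mul, Matrix.mul_smul, Matrix.smul_mul, hJcU, hB']
  set e : Fin (m+1) → Polynomial ℤ := Pi.single 0 1 with he
  set V : Matrix (Fin (m+1)) (Fin (m+1)) (Polynomial ℤ) := B'.updateRow 0 e with hV
  have hdet2 : ((2 : Polynomial ℤ) • B - Jc).det
      = 2^(m+1) * B'.det - 2^m * V.det := by
    rw [hdet1, hW]
    have hsplit : (2 : Polynomial ℤ) • B' - Matrix.of (fun i j => if i = 0 ∧ j = 0 then (1:Polynomial ℤ) else 0)
        = ((2 : Polynomial ℤ) • B').updateRow 0 (((2 : Polynomial ℤ) • B') 0 + (-1 : Polynomial ℤ) • e) := by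
      ext i j : 1
      rcases eq_or_ne i 0 with h | h
      · subst h
        simp [Matrix.sub_apply, Matrix.updateRow_self, he, Pi.single_apply, eq_comm, sub_eq_add_neg]
      · simp [Matrix.sub_apply, Matrix.updateRow_ne h, h]
    rw [hsplit, Matrix.det_updateRow_add, Matrix.det_updateRow_smul, Matrix.updateRow_eq_self,
      Matrix.det_smul]
    have hT : ((2 : Polynomial ℤ) • B').updateRow 0 e
        = Matrix.of (fun i j => (if i = 0 then 1 else 2) * V i j) := by
      ext i j : 1
      rcases eq_or_ne i 0 with h | h
      · subst h; simp [hV, Matrix.updateRow_self]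
      · simp [hV, Matrix.updateRow_ne h, h, Matrix.smul_apply]
    rw [hT, Matrix.det_mul_column]
    have hprod : (∏ i : Fin (m+1), (if i = 0 then (1:Polynomial ℤ) else 2)) = 2^m := by
      rw [← Finset.prod_erase_mul Finset.univ _ (Finset.mem_univ (0 : Fin (m+1)))]
      rw [if_pos rfl, mul_one]
      rw [Finset.prod_congr rfl (fun i hi => if_neg (Finset.ne_of_mem_erase hi))]
      rw [Finset.prod_const, Finset.card_erase_of_mem (Finset.mem_univ _), Finset.card_univ,
        Fintype.card_fin, Nat.add_sub_cancel]
    rw [hprod]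
    simp [Fintype.card_fin]
    ring
  have hVdvd : (2 : Polynomial ℤ) ∣ V.det := by
    set π : Polynomial ℤ →+* Polynomial (ZMod 2) :=
      Polynomial.mapRingHom (Int.castRingHom (ZMod 2)) with hπ
    have hsym : B'ᵀ = B' := by
      rw [hB', Matrix.transpose_mul, Matrix.transpose_mul, Matrix.transpose_transpose, hBt,
        Matrix.mul_assoc]
    have hUt : Uᵀ = 1 - Lᵀ := by rw [hU, Matrix.transpose_sub, Matrix.transpose_one]
    have hB'e : B' = B - L * B - B * Lᵀ + L * B * Lᵀ := by
      rw [hB', hUt, hU]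
      noncomm_ring
    have hLM : ∀ (Mx : Matrix (Fin (m+1)) (Fin (m+1)) (Polynomial ℤ)) (i j : Fin (m+1)),
        i ≠ 0 → (L * Mx) i j = Mx 0 j := by
      intro Mx i j h
      simp [Matrix.mul_apply, hL, h, ite_mul, one_mul, zero_mul, Finset.sum_ite_eq,
        Finset.sum_ite_eq']
    have hML : ∀ (Mx : Matrix (Fin (m+1)) (Fin (m+1)) (Polynomial ℤ)) (i j : Fin (m+1)),
        j ≠ 0 → (Mx * Lᵀ) i j = Mx i 0 := by
      intro Mx i j h
      simp [Matrix.mul_apply, hL, h, Matrix.transpose_apply, mul_ite, mul_one, mul_zero,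
        Finset.sum_ite_eq, Finset.sum_ite_eq']
    have hdiag : ∀ i : Fin m, B' i.succ i.succ = 2 * X - 2 * B i.succ 0 := by
      intro i
      have hs : (i.succ : Fin (m+1)) ≠ 0 := Fin.succ_ne_zero i
      have hB0 : B 0 i.succ = B i.succ 0 := by
        simpa [Matrix.transpose_apply] using congrFun (congrFun hBt i.succ) 0
      rw [hB'e]
      simp only [Matrix.add_apply, Matrix.sub_apply]
      rw [Matrix.mul_assoc, hLM B _ _ hs, hML B _ _ hs, hLM (B * Lᵀ) _ _ hs, hML B _ _ hs,
        hd, hd, hB0]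
      ring
    have h0 : π V.det = 0 := by
      rw [RingHom.map_det, RingHom.mapMatrix_apply]
      have hVmap : V.map π = ((B'.map π).updateRow 0 (Pi.single 0 1)) := by
        ext i j : 1
        rcases eq_or_ne i 0 with h | h
        · subst h
          simp only [Matrix.map_apply, hV, Matrix.updateRow_self, he, Pi.single_apply,
            apply_ite π, _root_.map_one, _root_.map_zero]
        · simp only [Matrix.map_apply, hV, Matrix.updateRow_ne h]
      rw [hVmap, Matrix.det_succ_row_zero]
      simp only [Matrix.updateRow_self]
      rw [Fin.sum_univ_succ]
      have hK : ((B'.map π).updateRow 0 (Pi.single 0 1)).submatrix Fin.succ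
          ((0 : Fin (m+1)).succAbove) = (B'.map π).submatrix Fin.succ Fin.succ := by
        ext i j : 1
        simp [Matrix.submatrix_apply, Matrix.updateRow_ne (Fin.succ_ne_zero i),
          Fin.succAbove_zero]
      have hKdet : ((B'.map π).submatrix Fin.succ Fin.succ).det = 0 := by
        apply det_eq_zero_of_odd_alt hm
        · have hsymK : ((B'.map π).submatrix Fin.succ Fin.succ)ᵀ
              = (B'.map π).submatrix Fin.succ Fin.succ := by
            ext i j : 1
            have := congrFun (congrFun hsym j.succ) i.succ
            simp only [Matrix.transpose_apply] at this ⊢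
            simp [Matrix.submatrix_apply, Matrix.map_apply, this]
          rw [hsymK]
          ext i j : 1
          exact (CharTwo.neg_eq _).symm
        · intro i
          simp only [Matrix.submatrix_apply, Matrix.map_apply]
          rw [hdiag i]
          have h20 : (2 : Polynomial (ZMod 2)) = 0 := CharTwo.two_eq_zero
          simp [hπ, Polynomial.map_ofNat, h20]
      rw [hK, hKdet]
      simp [Pi.single_apply, Fin.succ_ne_zero]
    have hC2 : (2 : Polynomial ℤ) = Polynomial.C 2 :=
      (map_ofNat (Polynomial.C : ℤ →+* Polynomial ℤ) 2).symm
    rw [hC2]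
    rw [Polynomial.C_dvd_iff_dvd_coeff]
    intro k
    have hk := congrArg (fun p => p.coeff k) h0
    simp only [hπ, Polynomial.coe_mapRingHom, Polynomial.coeff_map, Polynomial.coeff_zero] at hk
    exact_mod_cast (ZMod.intCast_zmod_eq_zero_iff_dvd _ 2).mp hk
  obtain ⟨q, hq⟩ := hVdvd
  refine ⟨B'.det - q, ?_⟩
  rw [hdet2, hq]
  ring

theorem stmt_8 (n : ℕ) (hn : Even n) (G : SimpleGraph (Fin n)) [DecidableRel G.Adj]
    (J : Matrix (Fin n) (Fin n) ℤ) (hJ : J = Matrix.of fun _ _ => (1 : ℤ)) :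
    ∀ r ≤ n, (2 : ℤ) ^ r ∣ (J - 2 • G.adjMatrix ℤ).charpoly.coeff (n - r) := by
  intro r hr
  rcases Nat.eq_zero_or_pos n with h0 | hpos
  · subst h0
    have hr0 : r = 0 := Nat.le_zero.mp hr
    subst hr0
    simpa using one_dvd _
  obtain ⟨m, rfl⟩ : ∃ m, n = m + 1 := ⟨n - 1, (Nat.succ_pred_eq_of_pos hpos).symm⟩
  have hm : Odd m := Nat.not_even_iff_odd.mp (Nat.even_add_one.mp hn)
  set A := G.adjMatrix ℤ with hA
  set M := J - 2 • A with hM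
  have hAsymm : ∀ i j : Fin (m+1), A j i = A i j := by
    intro i j
    by_cases hadj : G.Adj i j
    · simp [hA, hadj, hadj.symm]
    · have hadj' : ¬ G.Adj j i := fun h => hadj h.symm
      simp [hA, hadj, hadj']
  set B : Matrix (Fin (m+1)) (Fin (m+1)) (Polynomial ℤ) :=
    Matrix.of (fun i j => (if i = j then (X : Polynomial ℤ) else 0) + C (A i j)) with hB
  have hBt : Bᵀ = B := by
    ext i j : 1
    simp only [Matrix.transpose_apply, hB, Matrix.of_apply, hAsymm i j]
    congr 1
    by_cases hij : i = j
    · subst hij; rfl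
    · simp [hij, Ne.symm hij]
  have hd : ∀ i, B i i = X := by
    intro i
    simp [hB, hA]
  set Jc : Matrix (Fin (m+1)) (Fin (m+1)) (Polynomial ℤ) := Matrix.of fun _ _ => 1 with hJc
  have hkey := key_dvd hm B Jc hBt hd hJc
  set ψ : Polynomial ℤ →+* Polynomial ℤ :=
    Polynomial.eval₂RingHom Polynomial.C (Polynomial.C 2 * X) with hψ
  have hC2 : (2 : Polynomial ℤ) = Polynomial.C 2 :=
    (map_ofNat (Polynomial.C : ℤ →+* Polynomial ℤ) 2).symm
  have hψmat : ψ.mapMatrix (Matrix.charmatrix M) = (2 : Polynomial ℤ) • B - Jc := by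
    ext i j : 1
    have hMij : M i j = 1 - 2 * A i j := by
      rw [hM, hJ, Matrix.sub_apply, Matrix.smul_apply, Matrix.of_apply, nsmul_eq_mul]
      norm_num
    rcases eq_or_ne i j with h | h
    · subst h
      simp only [RingHom.mapMatrix_apply, Matrix.map_apply, Matrix.charmatrix_apply_eq, hψ,
        Polynomial.coe_eval₂RingHom, Polynomial.eval₂_sub, Polynomial.eval₂_X,
        Polynomial.eval₂_C, Matrix.sub_apply, Matrix.smul_apply, hB, Matrix.of_apply, hJc,
        eq_self_iff_true, if_true, smul_eq_mul, hMij]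
      rw [_root_.map_sub, _root_.map_mul, _root_.map_one]
      rw [← hC2]
      ring
    · simp only [RingHom.mapMatrix_apply, Matrix.map_apply, Matrix.charmatrix_apply_ne _ _ _ h,
        hψ, Polynomial.coe_eval₂RingHom, Polynomial.eval₂_neg, Polynomial.eval₂_C,
        Matrix.sub_apply, Matrix.smul_apply, hB, Matrix.of_apply, hJc, if_neg h, smul_eq_mul,
        hMij]
      rw [_root_.map_sub, _root_.map_mul, _root_.map_one]
      rw [← hC2]
      ring
  have hdet : ψ M.charpoly = ((2 : Polynomial ℤ) • B - Jc).det := by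
    rw [Matrix.charpoly, RingHom.map_det, hψmat]
  have hdvd : (2 : Polynomial ℤ)^(m+1) ∣ ψ M.charpoly := by
    rw [hdet]; exact hkey
  obtain ⟨q, hq⟩ := hdvd
  have hcomp : ψ M.charpoly = M.charpoly.comp (C 2 * X) := rfl
  have hcoeff := congrArg (fun p => p.coeff (m + 1 - r)) hq
  simp only [hcomp] at hcoeff
  rw [coeff_comp_two] at hcoeff
  have h2pow : ((2 : Polynomial ℤ)^(m+1)) = Polynomial.C ((2:ℤ)^(m+1)) := by
    rw [map_pow, ← hC2]
  rw [h2pow, Polynomial.coeff_C_mul] at hcoeff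
  have hsplit : (2:ℤ)^(m+1) = 2^(m+1-r) * 2^r := by
    rw [← pow_add, Nat.sub_add_cancel hr]
  rw [hsplit, mul_assoc] at hcoeff
  have hcancel := mul_left_cancel₀ (pow_ne_zero (m+1-r) (two_ne_zero (α := ℤ))) hcoeff
  exact ⟨q.coeff (m+1-r), hcancel⟩
end

section
/- Let A be the adjacency matrix of a graph of order n (any parity), and write χ_{J−2A}(x) = Σ_{i=0}^n a_i x^{n−i}. Then 2^r divides a_r for every even index r. -/
open Polynomial Matrix Finset

lemma aux_even_card_s9 {α : Type*} [DecidableEq α] (s : Finset α) (σ : α → α)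
    (hmem : ∀ a ∈ s, σ a ∈ s) (hinv : ∀ a ∈ s, σ (σ a) = a) (hne : ∀ a ∈ s, σ a ≠ a) :
    Even s.card := by
  have h0 : ∑ _x ∈ s, (1 : ZMod 2) = 0 :=
    Finset.sum_involution (fun a _ => σ a)
      (fun a ha => by decide)
      (fun a ha _ => hne a ha) (fun a ha => hmem a ha) (fun a ha => hinv a ha)
  rw [Finset.sum_const, nsmul_eq_mul, mul_one] at h0
  exact even_iff_two_dvd.mpr ((ZMod.natCast_eq_zero_iff s.card 2).mp h0)

lemma aux_coeff_comp (p : ℤ[X]) (k : ℕ) :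
    (p.comp (2 * X)).coeff k = 2 ^ k * p.coeff k := by
  induction p using Polynomial.induction_on' with
  | add p q hp hq => simp [add_comp, hp, hq, mul_add]
  | monomial m a =>
    have h2 : (2 : ℤ[X]) = C 2 := by norm_num
    rw [← C_mul_X_pow_eq_monomial, h2]
    simp only [mul_comp, C_comp, X_comp, pow_comp, mul_pow, coeff_C_mul, coeff_X_pow, ← C_pow,
      ← mul_assoc, ← C_mul]
    split_ifs with h
    · subst h; ring
    · ring


lemma aux_main (n r : ℕ) (hr : r ≤ n) (hre : Even r)
    (A : Matrix (Fin n) (Fin n) ℤ)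
    (hsym : ∀ i j, A i j = A j i) (hdiag : ∀ i, A i i = 0) :
    (2 : ℤ) ^ n ∣
      (Matrix.det (Matrix.fromBlocks (1 : Matrix Unit Unit ℤ[X])
        (Matrix.of fun _ _ => 1) (Matrix.of fun _ _ => 1)
        (Matrix.of fun i j => 2 * ((if i = j then (X : ℤ[X]) else 0)
          + C (A i j))))).coeff (n - r) := by
  classical
  rcases Nat.eq_zero_or_pos n with rfl | hn
  · simp
  set k := n - r with hk
  set B : Matrix (Unit ⊕ Fin n) (Unit ⊕ Fin n) ℤ[X] :=
    fromBlocks 1 (of fun _ _ => 1) (of fun _ _ => 1)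
      (of fun i j => 2 * ((if i = j then (X : ℤ[X]) else 0) + C (A i j))) with hBdef
  have hcard : Fintype.card (Unit ⊕ Fin n) = n + 1 := by
    rw [Fintype.card_sum, Fintype.card_unit, Fintype.card_fin, Nat.add_comm]
  have hB11 : B (Sum.inl ()) (Sum.inl ()) = 1 := by simp [hBdef, Matrix.one_apply]
  have hB12 : ∀ b, B (Sum.inl ()) (Sum.inr b) = 1 := fun b => by simp [hBdef]
  have hB21 : ∀ a, B (Sum.inr a) (Sum.inl ()) = 1 := fun a => by simp [hBdef]
  have hB22 : ∀ a b, B (Sum.inr a) (Sum.inr b)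
      = 2 * ((if a = b then (X:ℤ[X]) else 0) + C (A a b)) := fun a b => by simp [hBdef]
  have hBsymm : ∀ i j, B i j = B j i := by
    rintro (⟨⟩ | a) (⟨⟩ | b)
    · rfl
    · rw [hB12, hB21]
    · rw [hB21, hB12]
    · rw [hB22, hB22, hsym a b]
      rcases eq_or_ne a b with rfl | h
      · rfl
      · rw [if_neg h, if_neg (Ne.symm h)]
  have hcoeff_dvd : ∀ (m : ℕ) (p : ℤ[X]), (2:ℤ[X])^m ∣ p → (2:ℤ)^m ∣ p.coeff k := by
    rintro m p ⟨q, rfl⟩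
    have h2 : (2:ℤ[X])^m = C ((2:ℤ)^m) := by rw [map_pow]; norm_num
    rw [h2, coeff_C_mul]
    exact Dvd.intro _ rfl
  have hdvd1 : ∀ σ : Equiv.Perm (Unit ⊕ Fin n), (2:ℤ[X])^(n-1) ∣ ∏ i, B (σ i) i := by
    intro σ
    set T : Finset (Unit ⊕ Fin n) := {Sum.inl (), σ⁻¹ (Sum.inl ())} with hT
    have hTc : ∀ i ∈ Tᶜ, (2:ℤ[X]) ∣ B (σ i) i := by
      intro i hi
      rw [Finset.mem_compl, hT, Finset.mem_insert, Finset.mem_singleton] at hi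
      push_neg at hi
      obtain ⟨hi1, hi2⟩ := hi
      obtain (⟨⟩ | a) := i
      · exact absurd rfl hi1
      · rcases hv : σ (Sum.inr a) with ⟨⟩ | b
        · exfalso; apply hi2
          rw [← hv]; simp
        · rw [hB22]; exact dvd_mul_right _ _
    have h1 : (2:ℤ[X])^(Tᶜ.card) ∣ ∏ i ∈ Tᶜ, B (σ i) i := by
      calc (2:ℤ[X])^(Tᶜ.card) = ∏ _i ∈ Tᶜ, (2:ℤ[X]) := (Finset.prod_const 2).symm
      _ ∣ ∏ i ∈ Tᶜ, B (σ i) i := Finset.prod_dvd_prod_of_dvd _ _ hTc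
    have h2 : ∏ i ∈ Tᶜ, B (σ i) i ∣ ∏ i, B (σ i) i :=
      Finset.prod_dvd_prod_of_subset _ _ _ (Finset.subset_univ _)
    have h3 : n - 1 ≤ Tᶜ.card := by
      have hle : T.card ≤ 2 := by
        refine le_trans (Finset.card_insert_le _ _) ?_
        rw [Finset.card_singleton]
      rw [Finset.card_compl, hcard]
      omega
    exact dvd_trans (pow_dvd_pow 2 h3) (dvd_trans h1 h2)
  have hdvd2 : ∀ σ : Equiv.Perm (Unit ⊕ Fin n), σ⁻¹ = σ →
      (2:ℤ)^n ∣ (∏ i, B (σ i) i).coeff k := by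
    intro σ hσ
    have hinv : ∀ i, σ (σ i) = i := fun i => by
      nth_rewrite 1 [← hσ]; exact (by simp)
    rcases h0 : σ (Sum.inl ()) with ⟨⟩ | j0
    · apply hcoeff_dvd
      set T : Finset (Unit ⊕ Fin n) := {Sum.inl ()} with hT
      have hTc : ∀ i ∈ Tᶜ, (2:ℤ[X]) ∣ B (σ i) i := by
        intro i hi
        rw [Finset.mem_compl, hT, Finset.mem_singleton] at hi
        obtain (⟨⟩ | a) := i
        · exact absurd rfl hi
        · rcases hv : σ (Sum.inr a) with ⟨⟩ | b
          · exfalso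
            have : Sum.inr a = Sum.inl () := σ.injective (by rw [hv, h0])
            simp at this
          · rw [hB22]; exact dvd_mul_right _ _
      have h1 : (2:ℤ[X])^(Tᶜ.card) ∣ ∏ i ∈ Tᶜ, B (σ i) i := by
        calc (2:ℤ[X])^(Tᶜ.card) = ∏ _i ∈ Tᶜ, (2:ℤ[X]) := (Finset.prod_const 2).symm
        _ ∣ ∏ i ∈ Tᶜ, B (σ i) i := Finset.prod_dvd_prod_of_dvd _ _ hTc
      have h2 : ∏ i ∈ Tᶜ, B (σ i) i ∣ ∏ i, B (σ i) i :=
        Finset.prod_dvd_prod_of_subset _ _ _ (Finset.subset_univ _)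
      have h3 : n ≤ Tᶜ.card := by
        rw [Finset.card_compl, hcard, hT, Finset.card_singleton]
        omega
      exact dvd_trans (pow_dvd_pow 2 h3) (dvd_trans h1 h2)
    · have hj0' : σ (Sum.inr j0) = Sum.inl () := by rw [← h0, hinv]
      set s : Finset (Unit ⊕ Fin n) := ({Sum.inl (), Sum.inr j0} : Finset _)ᶜ with hs
      have hmem_s : ∀ i, i ∈ s ↔ (i ≠ Sum.inl () ∧ i ≠ Sum.inr j0) := by
        intro i
        rw [hs, Finset.mem_compl, Finset.mem_insert, Finset.mem_singleton]
        push_neg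
        rfl
      have hsplit : ∏ i, B (σ i) i
          = (∏ i ∈ s, B (σ i) i) * ∏ i ∈ ({Sum.inl (), Sum.inr j0} : Finset _), B (σ i) i :=
        (Finset.prod_compl_mul_prod _ _).symm
      have hpair : ∏ i ∈ ({Sum.inl (), Sum.inr j0} : Finset (Unit ⊕ Fin n)), B (σ i) i = 1 := by
        rw [Finset.prod_insert (by simp), Finset.prod_singleton, h0, hj0', hB21, hB12, one_mul]
      have hσs : ∀ i ∈ s, σ i ∈ s := by
        intro i hi
        rw [hmem_s] at hi ⊢
        obtain ⟨h1, h2⟩ := hi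
        constructor
        · intro h; apply h2; rw [← hinv i, h, h0]
        · intro h; apply h1; rw [← hinv i, h, hj0']
      set t : Unit ⊕ Fin n → Fin n := Sum.elim (fun _ => j0) id with ht
      set W : Unit ⊕ Fin n → ℤ[X] :=
        fun i => (if σ i = i then (X:ℤ[X]) else 0) + C (A (t (σ i)) (t i)) with hW
      have hsW : ∀ i ∈ s, B (σ i) i = 2 * W i := by
        intro i hi
        rw [hmem_s] at hi
        obtain ⟨h1, h2⟩ := hi
        obtain (⟨⟩ | a) := i
        · exact absurd rfl h1
        · rcases hv : σ (Sum.inr a) with ⟨⟩ | b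
          · exfalso; apply h2
            conv_lhs => rw [← hinv (Sum.inr a)]
            rw [hv, h0]
          · rw [hB22]
            simp only [hW, hv, ht, Sum.elim_inr, Sum.inr.injEq, id]
      have hprod_s : ∏ i ∈ s, B (σ i) i = 2^s.card * ∏ i ∈ s, W i := by
        rw [Finset.prod_congr rfl hsW, Finset.prod_mul_distrib, Finset.prod_const]
      set F := s.filter (fun i => σ i = i) with hF
      set Gs := s.filter (fun i => ¬ σ i = i) with hGs
      have hWsplit : ∏ i ∈ s, W i = (∏ i ∈ F, W i) * ∏ i ∈ Gs, W i :=
        (Finset.prod_filter_mul_prod_filter_not s _ _).symm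
      have hWF : ∏ i ∈ F, W i = X ^ F.card := by
        rw [← Finset.prod_const]
        refine Finset.prod_congr rfl fun i hi => ?_
        rw [hF, Finset.mem_filter] at hi
        simp only [hW]
        rw [if_pos hi.2, hi.2, hdiag, map_zero, add_zero]
      have hWG : ∏ i ∈ Gs, W i = C (∏ i ∈ Gs, A (t (σ i)) (t i)) := by
        rw [map_prod]
        refine Finset.prod_congr rfl fun i hi => ?_
        rw [hGs, Finset.mem_filter] at hi
        simp only [hW]
        rw [if_neg hi.2, zero_add]
      have hGeven : Even Gs.card := by
        apply aux_even_card_s9 Gs σ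
        · intro a ha; rw [hGs, Finset.mem_filter] at ha ⊢
          refine ⟨hσs a ha.1, ?_⟩
          rw [hinv]
          exact fun h => ha.2 h.symm
        · intro a ha; exact hinv a
        · intro a ha; rw [hGs, Finset.mem_filter] at ha; exact ha.2
      have hFG : F.card + Gs.card = s.card :=
        Finset.card_filter_add_card_filter_not _
      have hscard : s.card = (n+1) - 2 := by
        have hp2 : ({Sum.inl (), Sum.inr j0} : Finset (Unit ⊕ Fin n)).card = 2 :=
          Finset.card_pair (by simp)
        rw [hs, Finset.card_compl, hcard, hp2]
      have hne_kF : k ≠ F.card := by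
        obtain ⟨u, hu⟩ := hre
        obtain ⟨v, hv⟩ := hGeven
        omega
      rw [hsplit, hpair, mul_one, hprod_s, hWsplit, hWF, hWG]
      have hrw : (2:ℤ[X])^s.card * (X ^ F.card * C (∏ i ∈ Gs, A (t (σ i)) (t i)))
          = C ((2:ℤ)^s.card * (∏ i ∈ Gs, A (t (σ i)) (t i))) * X ^ F.card := by
        rw [map_mul C, map_pow]
        norm_num
        ring
      rw [hrw, coeff_C_mul, coeff_X_pow, if_neg hne_kF, mul_zero]
      exact dvd_zero _
  haveI : NeZero ((2:ℕ)^n) := ⟨pow_ne_zero n (by norm_num)⟩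
  have hdet : (det B).coeff k = ∑ σ : Equiv.Perm (Unit ⊕ Fin n),
      ((Equiv.Perm.sign σ : ℤ)) * (∏ i, B (σ i) i).coeff k := by
    rw [det_apply', finset_sum_coeff]
    refine Finset.sum_congr rfl fun σ _ => ?_
    rw [← C_eq_intCast, coeff_C_mul]
    norm_cast
  have hcastpow : (((2:ℕ)^n : ℕ) : ℤ) = (2:ℤ)^n := by push_cast; ring
  rw [hdet]
  have hfinal : ((∑ σ : Equiv.Perm (Unit ⊕ Fin n),
      ((Equiv.Perm.sign σ : ℤ)) * (∏ i, B (σ i) i).coeff k : ℤ) : ZMod (2^n)) = 0 := by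
    rw [Int.cast_sum]
    rw [← Finset.sum_filter_add_sum_filter_not Finset.univ (fun σ => σ⁻¹ = σ)]
    have hA0 : ∑ σ ∈ Finset.univ.filter (fun σ : Equiv.Perm (Unit ⊕ Fin n) => σ⁻¹ = σ),
        ((((Equiv.Perm.sign σ : ℤ) * (∏ i, B (σ i) i).coeff k : ℤ)) : ZMod (2^n)) = 0 := by
      refine Finset.sum_eq_zero fun σ hσ => ?_
      rw [Finset.mem_filter] at hσ
      rw [ZMod.intCast_zmod_eq_zero_iff_dvd, hcastpow]
      exact (hdvd2 σ hσ.2).mul_left _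
    have hB0 : ∑ σ ∈ Finset.univ.filter (fun σ : Equiv.Perm (Unit ⊕ Fin n) => ¬σ⁻¹ = σ),
        ((((Equiv.Perm.sign σ : ℤ) * (∏ i, B (σ i) i).coeff k : ℤ)) : ZMod (2^n)) = 0 := by
      apply Finset.sum_involution (fun σ _ => σ⁻¹)
      · intro σ hσ
        have hcc : (∏ i, B (σ⁻¹ i) i) = ∏ i, B (σ i) i := by
          calc ∏ i, B (σ⁻¹ i) i = ∏ i, B (σ⁻¹ (σ i)) (σ i) := (Equiv.prod_comp σ _).symm
          _ = ∏ i, B (σ i) i := by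
              refine Fintype.prod_congr _ _ fun i => ?_
              rw [show σ⁻¹ (σ i) = i by simp]
              exact (hBsymm (σ i) i).symm
        rw [Equiv.Perm.sign_inv, hcc, ← Int.cast_add, ← two_mul,
          ZMod.intCast_zmod_eq_zero_iff_dvd, hcastpow]
        obtain ⟨c, hc⟩ := hcoeff_dvd (n-1) _ (hdvd1 σ)
        rw [hc]
        have h2n : (2:ℤ)^n = 2 * 2^(n-1) := by
          rw [← pow_succ']
          congr 1
          omega
        rw [h2n]
        exact mul_dvd_mul_left 2 ((Dvd.intro _ rfl).mul_left _)
      · intro σ hσ _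
        rw [Finset.mem_filter] at hσ
        exact fun h => hσ.2 h
      · intro σ hσ
        exact inv_inv σ
      · intro σ hσ
        rw [Finset.mem_filter] at hσ ⊢
        refine ⟨Finset.mem_univ _, ?_⟩
        rw [inv_inv]
        exact fun h => hσ.2 h.symm
    rw [hA0, hB0, add_zero]
  have := (ZMod.intCast_zmod_eq_zero_iff_dvd _ ((2:ℕ)^n)).mp hfinal
  rw [hcastpow] at this
  exact this
theorem stmt_9 (n : ℕ) (G : SimpleGraph (Fin n)) [DecidableRel G.Adj]
    (J : Matrix (Fin n) (Fin n) ℤ) (hJ : J = Matrix.of fun _ _ => (1 : ℤ)) :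
    ∀ r ≤ n, Even r → (2 : ℤ) ^ r ∣ (J - 2 • G.adjMatrix ℤ).charpoly.coeff (n - r) := by
  intro r hr hre
  classical
  set A := G.adjMatrix ℤ with hA
  set M := J - 2 • A with hM
  set p := M.charpoly with hp
  have hsym : ∀ i j, A i j = A j i := fun i j => (G.isSymm_adjMatrix.apply j i)
  have hdiag : ∀ i, A i i = 0 := fun i => by simp [hA]
  have hcomp : (p.comp (2 * X)).coeff (n - r) = 2 ^ (n - r) * p.coeff (n - r) :=
    aux_coeff_comp p _
  let φ : ℤ[X] →+* ℤ[X] := eval₂RingHom C (2 * X)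
  have hφc : ∀ q : ℤ[X], φ q = q.comp (2 * X) := fun q => rfl
  have hdet1 : p.comp (2 * X) = ((charmatrix M).map φ).det := by
    rw [← hφc, hp, Matrix.charpoly]
    exact φ.map_det M.charmatrix
  have hC2 : (C (2:ℤ) : ℤ[X]) = 2 := by norm_num
  have hmat : (charmatrix M).map φ
      = (Matrix.of fun i j => 2 * ((if i = j then (X : ℤ[X]) else 0) + C (A i j)))
        - (Matrix.of fun (_ : Fin n) (_ : Unit) => (1:ℤ[X]))
          * (Matrix.of fun (_ : Unit) (_ : Fin n) => (1:ℤ[X])) := by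
    refine Matrix.ext fun i j => ?_
    have hMij : M i j = 1 - 2 * A i j := by
      rw [hM, Matrix.sub_apply, Matrix.smul_apply, hJ, Matrix.of_apply]
      simp [nsmul_eq_mul]
    rw [Matrix.sub_apply, Matrix.mul_apply, Fintype.sum_unique]
    simp only [Matrix.of_apply, one_mul]
    rcases eq_or_ne i j with rfl | hij
    · rw [Matrix.map_apply, charmatrix_apply_eq, hφc, sub_comp, X_comp, C_comp, hMij,
        if_pos rfl, map_sub C, map_mul C, _root_.map_one C, hC2]
      ring
    · rw [Matrix.map_apply, charmatrix_apply_ne _ _ _ hij, hφc, neg_comp, C_comp, hMij,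
        if_neg hij, map_sub C, map_mul C, _root_.map_one C, hC2]
      ring
  have hkey := aux_main n r hr hre A hsym hdiag
  rw [det_fromBlocks_one₁₁, ← hmat, ← hdet1, hcomp] at hkey
  have hpow : (2:ℤ)^n = 2^(n-r) * 2^r := by
    rw [← pow_add]
    congr 1
    omega
  rw [hpow] at hkey
  exact (mul_dvd_mul_iff_left (a := (2:ℤ)^(n-r)) (pow_ne_zero _ two_ne_zero)).mp hkey
end

section
/- Let S be a Seidel matrix of even order n. Then the characteristic polynomial of S satisfies χ_S(x) ≡ (x+1)^n (mod 2ℤ[x]), i.e., every coefficient of χ_S(x) − (x+1)^n is even. -/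
open Polynomial Matrix

lemma aux_charpoly (n : ℕ) (hn : Even n)
    (N : Matrix (Fin n) (Fin n) (ZMod 2)) (hN : ∀ i j, N i j = 1 + if i = j then 1 else 0) :
    N.charpoly = (Polynomial.X + 1) ^ n := by
  classical
  set K := FractionRing (Polynomial (ZMod 2))
  let a : Polynomial (ZMod 2) →+* K := algebraMap _ _
  have hinj : Function.Injective a := IsFractionRing.injective _ _
  haveI : CharP K 2 := charP_of_injective_ringHom hinj 2
  apply hinj
  have hdet : a N.charpoly = ((charmatrix N).map a).det := by
    rw [Matrix.charpoly, RingHom.map_det, RingHom.mapMatrix_apply]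
  set x : K := a Polynomial.X with hx
  have hx1 : (x + 1) ≠ 0 := by
    intro h
    have h0 : (Polynomial.X + Polynomial.C 1 : Polynomial (ZMod 2)) ≠ 0 :=
      Polynomial.X_add_C_ne_zero 1
    apply h0
    apply hinj
    rw [map_add, map_zero, ← hx]
    simpa using h
  have h2K : (2 : K) = 0 := CharTwo.two_eq_zero
  have hfac : (charmatrix N).map a =
      (x + 1) • (1 + Matrix.replicateCol Unit (fun _ => (x+1)⁻¹) * Matrix.replicateRow Unit (fun _ => (1:K))) := by
    ext i j
    simp only [Matrix.map_apply, Matrix.smul_apply, Matrix.add_apply, Matrix.one_apply,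
      Matrix.mul_apply, Matrix.replicateCol_apply, Matrix.replicateRow_apply, Finset.sum_const,
      Finset.card_univ, Fintype.card_unit, one_smul, smul_eq_mul]
    rw [charmatrix_apply, hN i j]
    by_cases h : i = j
    · subst h
      have h11 : ((1:ZMod 2) + (1:ZMod 2)) = 0 := by decide
      simp only [if_true, h11, Polynomial.C_0, sub_zero, mul_one, one_smul,
        Matrix.diagonal_apply_eq]
      rw [mul_add, mul_one, mul_inv_cancel₀ hx1, ← hx, add_assoc,
        one_add_one_eq_two, h2K, add_zero]
    · simp only [if_neg h, Matrix.diagonal_apply_ne _ h, Matrix.one_apply_ne h,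
        zero_add, add_zero, mul_zero, mul_one, one_smul]
      rw [mul_inv_cancel₀ hx1, zero_sub, Polynomial.C_1, map_neg, _root_.map_one,
        CharTwo.neg_eq]
  rw [hdet, hfac, Matrix.det_smul, Matrix.det_one_add_replicateCol_mul_replicateRow]
  have hn2 : ((n : K)) = 0 := by
    obtain ⟨m, hm⟩ := hn
    have : ((n : K)) = 2 * m := by rw [hm]; push_cast; ring
    rw [this, h2K, zero_mul]
  have hdot : ((fun _ : Fin n => (1:K)) ⬝ᵥ fun _ => (x + 1)⁻¹) = 0 := by
    simp only [dotProduct, one_mul, Finset.sum_const, Finset.card_univ, Fintype.card_fin,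
      nsmul_eq_mul, hn2, zero_mul]
  rw [hdot, add_zero, mul_one, map_pow, map_add, _root_.map_one, Fintype.card_fin, hx]

theorem stmt_10 (n : ℕ) (hn : Even n) (S : Matrix (Fin n) (Fin n) ℤ)
    (hsymm : S.IsSymm) (hdiag : ∀ i, S i i = 0)
    (hoff : ∀ i j, i ≠ j → S i j = 1 ∨ S i j = -1) :
    ∀ k : ℕ, Even ((S.charpoly - (Polynomial.X + 1) ^ n).coeff k) := by
  intro k
  have key : (S.charpoly - (Polynomial.X + 1) ^ n).map (Int.castRingHom (ZMod 2)) = 0 := by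
    have hN : ∀ i j, (S.map (Int.castRingHom (ZMod 2))) i j = 1 + if i = j then 1 else 0 := by
      intro i j
      by_cases h : i = j
      · subst h
        simp [Matrix.map_apply, hdiag i]
        decide
      · rcases hoff i j h with h1 | h1 <;>
          simp [Matrix.map_apply, h1, if_neg h] <;> decide
    have := aux_charpoly n hn (S.map (Int.castRingHom (ZMod 2))) hN
    rw [Matrix.charpoly_map] at this
    rw [Polynomial.map_sub, this, Polynomial.map_pow, Polynomial.map_add, Polynomial.map_X,
      Polynomial.map_one, sub_self]
  have hc := congrArg (fun p => Polynomial.coeff p k) key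
  simp only [Polynomial.coeff_map, Polynomial.coeff_zero] at hc
  rw [Int.even_iff]
  have h2 := (ZMod.intCast_zmod_eq_zero_iff_dvd ((S.charpoly - (Polynomial.X + 1) ^ n).coeff k) 2).mp
  simp only [Int.castRingHom, RingHom.coe_mk, MonoidHom.coe_mk, OneHom.coe_mk] at hc
  have h3 := h2 hc
  omega
end

section
/- For every positive integer m and every i ∈ {1,…,m}, the inequality ν₂(binomial(m,i)) + 2i ≥ ν₂(m) + 2 holds, where ν₂ denotes the 2-adic valuation. -/
theorem stmt_12 (m i : ℕ) (hm : 0 < m) (hi : 1 ≤ i) (him : i ≤ m) :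
    padicValNat 2 (m.choose i) + 2 * i ≥ padicValNat 2 m + 2 := by
  have hchoose : 0 < m.choose i := Nat.choose_pos him
  -- key identity: m * C(m-1, i-1) = C(m, i) * i
  obtain ⟨a, rfl⟩ : ∃ a, m = a + 1 := ⟨m - 1, (Nat.succ_pred_eq_of_pos hm).symm⟩
  obtain ⟨b, rfl⟩ : ∃ b, i = b + 1 := ⟨i - 1, (Nat.succ_pred_eq_of_pos hi).symm⟩
  have hid : (a + 1) * a.choose b = (a + 1).choose (b + 1) * (b + 1) :=
    Nat.add_one_mul_choose_eq a b
  have hcp : 0 < a.choose b := Nat.choose_pos (by omega)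
  have h1 : padicValNat 2 (a + 1) + padicValNat 2 (a.choose b)
      = padicValNat 2 ((a + 1).choose (b + 1)) + padicValNat 2 (b + 1) := by
    rw [← padicValNat.mul (by omega) hcp.ne', ← padicValNat.mul hchoose.ne' (by omega), hid]
  have hν : padicValNat 2 (a + 1) ≤ padicValNat 2 ((a + 1).choose (b + 1))
      + padicValNat 2 (b + 1) := by omega
  have h2 : padicValNat 2 (b + 1) ≤ b := by
    have hdvd : 2 ^ padicValNat 2 (b + 1) ≤ b + 1 :=
      Nat.le_of_dvd (by omega) (pow_padicValNat_dvd)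
    have := Nat.lt_two_pow_self (n := padicValNat 2 (b + 1))
    omega
  omega
end

section
/- Let l ≥ 1 and let m₁,…,m_l be nonnegative integers with positive sum, and let m be any nonzero element among the m_i. Then the 2-adic valuation of the rational number (m₁+⋯+m_l − 1)! / (m₁!·m₂!⋯m_l!) is at least −ν₂(m). -/
theorem stmt_15 (l : ℕ) (hl : 1 ≤ l) (m : Fin l → ℕ) (hsum : 0 < ∑ i, m i)
    (j : Fin l) (hj : m j ≠ 0) :
    padicValRat 2 ((((∑ i, m i) - 1).factorial : ℚ) / ∏ i, ((m i).factorial : ℚ)) ≥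
      -(padicValNat 2 (m j) : ℤ) := by
  classical
  set m' : Fin l → ℕ := Function.update m j (m j - 1) with hm'
  have hmj : 1 ≤ m j := Nat.one_le_iff_ne_zero.mpr hj
  have hsplit : ∀ f : Fin l → ℕ, ∑ i, f i = f j + ∑ i ∈ Finset.univ.erase j, f i := by
    intro f
    rw [Finset.add_sum_erase _ f (Finset.mem_univ j)]
  have herase : ∀ i ∈ Finset.univ.erase j, m' i = m i := by
    intro i hi
    have : i ≠ j := Finset.ne_of_mem_erase hi
    simp [hm', Function.update_of_ne this]
  have hsum' : ∑ i, m' i = (∑ i, m i) - 1 := by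
    rw [hm', Finset.sum_update_of_mem (Finset.mem_univ j), hsplit m]
    simp only [← Finset.erase_eq]
    omega
  have hfac : (m j) * ∏ i, (m' i).factorial = ∏ i, (m i).factorial := by
    rw [← Finset.mul_prod_erase _ _ (Finset.mem_univ j),
        ← Finset.mul_prod_erase _ (fun i => (m i).factorial) (Finset.mem_univ j),
        Finset.prod_congr rfl (fun i hi => by rw [herase i hi])]
    rw [← mul_assoc]
    congr 1
    simp only [hm', Function.update_self]
    rw [← Nat.succ_pred_eq_of_pos hmj]
    rw [Nat.factorial_succ]
    simp
  set N := Nat.multinomial Finset.univ m' with hN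
  have hNspec : (∏ i, (m' i).factorial) * N = ((∑ i, m i) - 1).factorial := by
    rw [hN, Nat.multinomial_spec, hsum']
  have hNpos : 0 < N := Nat.multinomial_pos _ _
  have hprodpos : ∀ i, (0:ℚ) < ((m i).factorial : ℚ) := by
    intro i; exact_mod_cast (m i).factorial_pos
  have hprodne : (∏ i, ((m i).factorial : ℚ)) ≠ 0 :=
    ne_of_gt (Finset.prod_pos fun i _ => hprodpos i)
  have hmjQ : ((m j : ℚ)) ≠ 0 := by exact_mod_cast hj
  have key : (((∑ i, m i) - 1).factorial : ℚ) / ∏ i, ((m i).factorial : ℚ)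
      = (N : ℚ) / (m j : ℚ) := by
    rw [div_eq_div_iff hprodne hmjQ]
    have h1 : ((((∑ i, m i) - 1).factorial : ℕ) : ℚ) * (m j : ℚ)
        = ((m j * ((∏ i, (m' i).factorial) * N) : ℕ) : ℚ) := by
      rw [hNspec]; push_cast; ring
    rw [h1]
    have h2 : (N : ℚ) * ∏ i, ((m i).factorial : ℚ)
        = ((N * ∏ i, (m i).factorial : ℕ) : ℚ) := by push_cast; ring
    rw [h2]
    congr 1
    rw [← hfac]; ring
  rw [key]
  have hNne : (N : ℚ) ≠ 0 := by exact_mod_cast hNpos.ne'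
  rw [padicValRat.div (p := 2) hNne hmjQ, padicValRat.of_nat, padicValRat.of_nat]
  have : (0:ℤ) ≤ (padicValNat 2 N : ℤ) := Int.natCast_nonneg _
  omega
end

section
/- Let f(x) = Π_{i=1}^d (x − λ_i) be a monic integer polynomial with f(x) ≡ (x+1)^d (mod 2ℤ[x]). Let μ be an integer and define g(x) = Π_{i=1}^d (x − (λ_i − 2μ)²). Then g(x) is an integer polynomial and g(x) ≡ (x+1)^d (mod 2ℤ[x]). -/
open Polynomial

lemma my_expand_contract {R : Type*} [CommRing R] (p : R[X])
    (h : ∀ k, ¬ 2 ∣ k → p.coeff k = 0) :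
    expand R 2 (contract 2 p) = p := by
  ext k
  rw [coeff_expand (by norm_num : 0 < 2)]
  split_ifs with hd
  · rw [coeff_contract (by norm_num), Nat.div_mul_cancel hd]
  · exact (h k hd).symm

open Polynomial in
theorem stmt_17 (d : ℕ) (f : Polynomial ℤ) (lam : Fin d → ℂ)
    (hf : f.map (Int.castRingHom ℂ) = ∏ i, (X - C (lam i)))
    (hcong : ∀ k, Even ((f - (X + 1) ^ d).coeff k)) (mu : ℤ) :
    ∃ g : Polynomial ℤ,
      g.map (Int.castRingHom ℂ) = (∏ i, (X - C ((lam i - 2 * mu) ^ 2))) ∧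
      ∀ k, Even ((g - (X + 1) ^ d).coeff k) := by
  obtain ⟨h, hh⟩ : ∃ q : ℤ[X], q = f.comp (X + C (2 * mu)) := ⟨_, rfl⟩
  obtain ⟨p, hp⟩ : ∃ q : ℤ[X], q = (-1) ^ d * (h * h.comp (-X)) := ⟨_, rfl⟩
  have hmh : h.map (Int.castRingHom ℂ) = ∏ i, (X - C (lam i - 2 * mu)) := by
    rw [hh, map_comp, hf, Polynomial.map_add, Polynomial.map_X, map_C, prod_comp]
    refine Finset.prod_congr rfl fun i _ => ?_
    rw [sub_comp, X_comp, C_comp, add_sub_assoc, ← C_sub, sub_eq_add_neg (X : ℂ[X]), ← C_neg]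
    congr 1
    rw [eq_intCast]
    push_cast
    ring
  have key : p.map (Int.castRingHom ℂ) =
      expand ℂ 2 (∏ i, (X - C ((lam i - 2 * mu) ^ 2))) := by
    have hneg : (h.comp (-X)).map (Int.castRingHom ℂ)
        = ∏ i, ((-1 : ℂ[X]) * (X + C (lam i - 2 * mu))) := by
      rw [map_comp, hmh, Polynomial.map_neg, Polynomial.map_X, prod_comp]
      exact Finset.prod_congr rfl fun i _ => by rw [sub_comp, X_comp, C_comp]; ring
    rw [hp, Polynomial.map_mul, Polynomial.map_pow, Polynomial.map_neg,
      Polynomial.map_one, Polynomial.map_mul, hmh, hneg]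
    rw [Finset.prod_mul_distrib, Finset.prod_const, Finset.card_univ, Fintype.card_fin]
    rw [show ((-1 : ℂ[X]) ^ d * ((∏ i, (X - C (lam i - 2 * mu))) *
        ((-1) ^ d * ∏ i, (X + C (lam i - 2 * mu)))))
      = ((-1) ^ d * (-1) ^ d) * ((∏ i, (X - C (lam i - 2 * mu))) *
        ∏ i, (X + C (lam i - 2 * mu))) from by ring,
      ← pow_add, Even.neg_one_pow ⟨d, rfl⟩, one_mul, ← Finset.prod_mul_distrib, map_prod]
    refine Finset.prod_congr rfl fun i _ => ?_
    have e : (expand ℂ 2) ((X : ℂ[X]) - C ((lam i - 2 * (mu:ℂ)) ^ 2))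
        = X ^ 2 - C ((lam i - 2 * (mu:ℂ)) ^ 2) := by
      rw [map_sub, expand_X, expand_C]
    rw [e, map_pow]
    ring
  have hodd : ∀ k, ¬ 2 ∣ k → p.coeff k = 0 := by
    intro k hk
    have := congrArg (fun q => Polynomial.coeff q k) key
    simp only [coeff_map, coeff_expand (by norm_num : 0 < 2), if_neg hk, eq_intCast] at this
    exact_mod_cast this
  refine ⟨contract 2 p, ?_, ?_⟩
  · rw [map_contract (by norm_num : (2:ℕ) ≠ 0), key,
      contract_expand (p := 2) (by norm_num)]
  · set φ : ℤ[X] →+* (ZMod 2)[X] := mapRingHom (Int.castRingHom (ZMod 2)) with hφ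
    have even_iff : ∀ q : ℤ[X], (∀ k, Even (q.coeff k)) ↔ φ q = 0 := by
      intro q
      simp only [hφ, Polynomial.ext_iff, coe_mapRingHom, coeff_map, coeff_zero,
        eq_intCast, ZMod.intCast_zmod_eq_zero_iff_dvd, Nat.cast_ofNat,
        ← even_iff_two_dvd]
    have hf2 : φ f = (X + 1) ^ d := by
      have := (even_iff _).mp hcong
      rw [map_sub, sub_eq_zero] at this
      rw [this]
      simp [hφ]
    have hc2 : (2 : (ZMod 2)[X]) = 0 := by
      exact_mod_cast CharP.cast_eq_zero ((ZMod 2)[X]) 2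
    have hφh : φ h = (X + 1) ^ d := by
      have e1 : φ h = (φ f).comp (X + C ((2 * mu : ℤ) : ZMod 2)) := by
        rw [hh, hφ, coe_mapRingHom, map_comp, Polynomial.map_add, Polynomial.map_X, map_C, eq_intCast]
      have e2 : ((2 * mu : ℤ) : ZMod 2) = 0 :=
        (ZMod.intCast_zmod_eq_zero_iff_dvd _ _).mpr ⟨mu, by push_cast; ring⟩
      rw [e1, hf2, e2, map_zero, add_zero, comp_X]
    have hφp : φ p = expand (ZMod 2) 2 ((X + 1) ^ d) := by
      have hcomp : φ (h.comp (-X)) = (X + 1) ^ d := by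
        rw [hφ, coe_mapRingHom, map_comp, Polynomial.map_neg, Polynomial.map_X,
          CharTwo.neg_eq, comp_X, ← coe_mapRingHom, ← hφ, hφh]
      have hm1 : φ (-1) = 1 := by rw [map_neg, map_one, CharTwo.neg_eq]
      rw [hp, map_mul, map_pow, map_mul, hφh, hcomp, hm1, one_pow, one_mul, ← pow_add,
        map_pow, map_add, expand_X, map_one]
      have h2 : (X + 1 : (ZMod 2)[X]) ^ 2 = X ^ 2 + 1 := by
        have : (X + 1 : (ZMod 2)[X]) ^ 2 = X ^ 2 + 2 * X + 1 := by ring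
        rw [this, hc2, zero_mul, add_zero]
      rw [← two_mul, pow_mul, h2]
    have hφg : φ (contract 2 p) = (X + 1) ^ d := by
      rw [hφ, coe_mapRingHom, map_contract (by norm_num : (2:ℕ) ≠ 0), ← coe_mapRingHom,
        ← hφ, hφp, contract_expand (p := 2) (by norm_num)]
    rw [even_iff, map_sub, hφg, sub_eq_zero]
    simp [hφ]
end

section
/- Let S be a Seidel matrix of order n, let T be a principal submatrix of S obtained by deleting one row and the corresponding column, and suppose the minimal polynomial of S is m_S(x) = Σ_{i=0}^d a_i x^{d−i} with a_0 = 1. Then χ_T(x) = (χ_S(x)/m_S(x)) · Σ_{i=0}^{d−1} b_i x^{d−1−i}, where b_0 = 1, b_1 = a_1, b_2 = a_2 + n − 1, and all b_i are integers. -/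
open Polynomial in
theorem stmt_19 (n : ℕ) (S : Matrix (Fin (n + 1)) (Fin (n + 1)) ℤ)
    (hsymm : S.IsSymm) (hdiag : ∀ i, S i i = 0)
    (hoff : ∀ i j, i ≠ j → S i j = 1 ∨ S i j = -1)
    (j : Fin (n + 1))
    (T : Matrix (Fin n) (Fin n) ℤ)
    (hT : T = S.submatrix j.succAbove j.succAbove)
    (d : ℕ) (hd : d = (minpoly ℤ S).natDegree)
    (a : ℕ → ℤ) (ha : ∀ i ≤ d, a i = (minpoly ℤ S).coeff (d - i)) :
    ∃ b : ℕ → ℤ, b 0 = 1 ∧ b 1 = a 1 ∧ b 2 = a 2 + (n + 1) - 1 ∧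
      T.charpoly * minpoly ℤ S =
        S.charpoly * ∑ i ∈ Finset.range d, Polynomial.C (b i) * X ^ (d - 1 - i) := by
  set m : ℤ[X] := minpoly ℤ S with hm
  have hint : IsIntegral ℤ S := Matrix.isIntegral S
  have hmon : m.Monic := minpoly.monic hint
  have hd1 : 0 < d := hd ▸ minpoly.natDegree_pos hint
  have hcoeffd : m.coeff d = 1 := by
    have := hmon.leadingCoeff
    rwa [Polynomial.leadingCoeff, ← hd] at this
  -- the "divided difference" coefficient matrices
  set cmat : ℕ → Matrix (Fin (n + 1)) (Fin (n + 1)) ℤ :=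
    fun i => ∑ k ∈ Finset.range (i + 1), m.coeff (d - k) • S ^ (i - k) with hcmat
  have hrec : ∀ i, cmat (i + 1) = S * cmat i + m.coeff (d - (i + 1)) • 1 := by
    intro i
    simp only [hcmat]
    rw [Finset.sum_range_succ, Finset.mul_sum]
    congr 1
    · apply Finset.sum_congr rfl
      intro k hk
      rw [Finset.mem_range] at hk
      rw [mul_smul_comm, ← pow_succ']
      congr 2
      omega
    · simp
  have hcd : cmat d = 0 := by
    have h0 : cmat d = ∑ k ∈ Finset.range (d + 1), m.coeff k • S ^ k := by
      simp only [hcmat]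
      rw [← Finset.sum_range_reflect]
      apply Finset.sum_congr rfl
      intro k hk
      rw [Finset.mem_range] at hk
      congr 2 <;> omega
    have h1 : (Polynomial.aeval S) m = 0 := minpoly.aeval ℤ S
    rwa [Polynomial.aeval_eq_sum_range, ← hd, ← h0] at h1
  -- helper lemmas on scalar matrices
  have hsm : ∀ (p : ℤ[X]) (M : Matrix (Fin (n+1)) (Fin (n+1)) ℤ[X]),
      Matrix.scalar (Fin (n+1)) p * M = p • M := by
    intro p M
    rw [Matrix.scalar_apply, ← Matrix.smul_eq_diagonal_mul]
  have hmapsmul : ∀ (c : ℤ) (M : Matrix (Fin (n+1)) (Fin (n+1)) ℤ),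
      (c • M).map (C : ℤ → ℤ[X]) = C c • M.map C := by
    intro c M; ext i k
    simp only [Matrix.map_apply, Matrix.smul_apply, smul_eq_mul, Polynomial.C_mul]
  have hmap1 : ∀ (c : ℤ), ((c • (1 : Matrix (Fin (n+1)) (Fin (n+1)) ℤ)).map (C : ℤ → ℤ[X]))
      = Matrix.scalar (Fin (n+1)) (C c) := by
    intro c
    rw [hmapsmul, Matrix.scalar_apply]
    ext i k
    by_cases h : i = k <;> simp [Matrix.one_apply, Matrix.diagonal_apply, h]
  set P : ℕ → Matrix (Fin (n+1)) (Fin (n+1)) ℤ[X] :=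
    fun e => ∑ i ∈ Finset.range e, (X : ℤ[X]) ^ (e - 1 - i) • (cmat i).map C with hP
  have hPstep : ∀ e, P (e+1) = (X : ℤ[X]) • P e + (cmat e).map C := by
    intro e
    simp only [hP, Finset.sum_range_succ, Finset.smul_sum, smul_smul, ← pow_succ']
    congr 1
    · apply Finset.sum_congr rfl
      intro i hi
      rw [Finset.mem_range] at hi
      congr 2
      omega
    · norm_num
  have key : ∀ e, Matrix.charmatrix S * P e =
      Matrix.scalar (Fin (n+1)) (∑ i ∈ Finset.range (e+1), C (m.coeff (d-i)) * X ^ (e-i))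
        - (cmat e).map C := by
    intro e
    induction e with
    | zero =>
        simp only [hP, Finset.range_zero, Finset.sum_empty, mul_zero]
        rw [Finset.sum_range_one]
        have h0 : cmat 0 = m.coeff d • 1 := by simp [hcmat]
        rw [h0, hmap1]
        simp
    | succ e ih =>
        rw [hPstep e, mul_add, mul_smul_comm, ih]
        have hSc : S * cmat e = cmat (e+1) - m.coeff (d-(e+1)) • 1 := by
          rw [hrec e]; abel
        have hA : Matrix.charmatrix S * (cmat e).map C
            = (X : ℤ[X]) • (cmat e).map C - (cmat (e+1)).map C
              + Matrix.scalar (Fin (n+1)) (C (m.coeff (d-(e+1)))) := by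
          rw [Matrix.charmatrix, sub_mul, hsm, RingHom.mapMatrix_apply, ← Matrix.map_mul,
            hSc, Matrix.map_sub, hmap1]
          · abel
          · exact fun a₁ a₂ => Polynomial.C_sub
        rw [hA]
        have hXs : (X : ℤ[X]) • (Matrix.scalar (Fin (n+1))
              (∑ i ∈ Finset.range (e+1), C (m.coeff (d-i)) * X ^ (e-i)))
            = Matrix.scalar (Fin (n+1))
              (∑ i ∈ Finset.range (e+1), C (m.coeff (d-i)) * X ^ (e+1-i)) := by
          rw [← hsm, ← _root_.map_mul]
          congr 1
          rw [Finset.mul_sum]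
          apply Finset.sum_congr rfl
          intro i hi
          rw [Finset.mem_range] at hi
          have : e + 1 - i = (e - i) + 1 := by omega
          rw [this, pow_succ]
          ring
        rw [smul_sub, hXs]
        have hsplit : (∑ i ∈ Finset.range (e+1+1), C (m.coeff (d-i)) * X ^ (e+1-i))
            = (∑ i ∈ Finset.range (e+1), C (m.coeff (d-i)) * X ^ (e+1-i))
              + C (m.coeff (d-(e+1))) := by
          rw [Finset.sum_range_succ]
          norm_num
        rw [hsplit, map_add]
        abel
  -- specialize at e = d
  have hmsum : (∑ i ∈ Finset.range (d+1), C (m.coeff (d-i)) * X ^ (d-i)) = m := by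
    rw [← Finset.sum_range_reflect]
    conv_rhs => rw [m.as_sum_range_C_mul_X_pow, ← hd]
    apply Finset.sum_congr rfl
    intro i hi
    rw [Finset.mem_range] at hi
    have h : d - (d + 1 - 1 - i) = i := by omega
    rw [h]
  have keyd : Matrix.charmatrix S * P d = Matrix.scalar (Fin (n+1)) m := by
    rw [key d, hmsum, hcd]
    simp
  -- multiply by the adjugate
  have hmain : S.charpoly • P d = m • (Matrix.charmatrix S).adjugate := by
    have h1 := congrArg (fun M => (Matrix.charmatrix S).adjugate * M) keyd
    rw [← mul_assoc, Matrix.adjugate_mul, Matrix.smul_mul, one_mul] at h1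
    rw [Matrix.charpoly, h1,
      ← (Matrix.scalar_commute m (fun r => Commute.all m r) _).eq, hsm]
  -- take the (j,j) entry
  have hentry : S.charpoly * (∑ i ∈ Finset.range d, X ^ (d-1-i) * C (cmat i j j))
      = m * (Matrix.charmatrix S).adjugate j j := by
    have h2 := congrArg (fun M => M j j) hmain
    simp only [Matrix.smul_apply, smul_eq_mul] at h2
    rw [← h2]
    congr 1
    simp only [hP, Matrix.sum_apply, Matrix.smul_apply, Matrix.map_apply, smul_eq_mul]
  -- the (j,j) entry of the adjugate is the charpoly of T
  have hadj : (Matrix.charmatrix S).adjugate j j = T.charpoly := by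
    rw [Matrix.adjugate_fin_succ_eq_det_submatrix]
    have hpow : ((-1 : ℤ[X]) ^ ((j : ℕ) + (j : ℕ))) = 1 := Even.neg_one_pow ⟨j, rfl⟩
    rw [hpow, one_mul, hT, Matrix.charpoly]
    have hcm : (Matrix.charmatrix S).submatrix j.succAbove j.succAbove
        = Matrix.charmatrix (S.submatrix j.succAbove j.succAbove) := by
      ext i k
      by_cases h : i = k
      · subst h
        simp [Matrix.charmatrix_apply_eq, Matrix.submatrix_apply]
      · rw [Matrix.submatrix_apply, Matrix.charmatrix_apply_ne _ _ _ h,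
          Matrix.charmatrix_apply_ne, Matrix.submatrix_apply]
        exact fun hh => h (Fin.succAbove_right_injective hh)
    rw [hcm]
  -- the (j,j) entry of S^2
  have hS2 : (S * S) j j = (n : ℤ) := by
    rw [Matrix.mul_apply]
    have h1 : ∀ k, S j k * S k j = if k = j then 0 else 1 := by
      intro k
      by_cases h : k = j
      · subst h; simp [hdiag]
      · rw [show S k j = S j k from hsymm.apply j k]
        rcases hoff j k (fun hh => h hh.symm) with h1 | h1 <;> rw [h1] <;> simp [h]
    calc (∑ k, S j k * S k j) = ∑ k : Fin (n+1), ((1:ℤ) - if k = j then 1 else 0) := by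
          apply Finset.sum_congr rfl
          intro k _
          rw [h1 k]
          by_cases h : k = j <;> simp [h]
      _ = (n : ℤ) := by
          rw [Finset.sum_sub_distrib, Finset.sum_const,
            Finset.sum_ite_eq' Finset.univ j (fun _ => (1:ℤ))]
          simp [Finset.card_univ]
  refine ⟨fun i => if i < d then cmat i j j else if i = 2 then a 2 + (n:ℤ) else a i,
    ?_, ?_, ?_, ?_⟩ <;> beta_reduce
  · rw [if_pos hd1]
    have hc0 : cmat 0 = m.coeff d • 1 := by simp [hcmat]
    rw [hc0]
    simp [Matrix.smul_apply, Matrix.one_apply_eq, hcoeffd]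
  · by_cases h : 1 < d
    · rw [if_pos h]
      have hc1 : cmat 1 = m.coeff d • S + m.coeff (d-1) • 1 := by
        simp [hcmat, Finset.sum_range_succ]
      rw [hc1, ha 1 (by omega)]
      simp only [Matrix.add_apply, Matrix.smul_apply, Matrix.one_apply_eq, hdiag j,
        smul_eq_mul, mul_zero, zero_add, mul_one]
    · rw [if_neg h]
      norm_num
  · by_cases h : 2 < d
    · rw [if_pos h]
      have hc2 : cmat 2 = m.coeff d • S ^ 2 + m.coeff (d-1) • S + m.coeff (d-2) • 1 := by
        simp [hcmat, Finset.sum_range_succ]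
      rw [hc2, ha 2 (by omega)]
      simp only [Matrix.add_apply, Matrix.smul_apply, Matrix.one_apply_eq, hdiag j,
        smul_eq_mul, mul_one, mul_zero, add_zero, hcoeffd, pow_two, hS2]
      ring
    · rw [if_neg h]
      norm_num
      ring
  · have hsum : (∑ i ∈ Finset.range d,
        C (if i < d then cmat i j j else if i = 2 then a 2 + (n:ℤ) else a i) * X ^ (d-1-i))
        = ∑ i ∈ Finset.range d, X ^ (d-1-i) * C (cmat i j j) := by
      apply Finset.sum_congr rfl
      intro i hi
      rw [Finset.mem_range] at hi
      rw [if_pos hi, mul_comm]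
    rw [hsum, hentry, hadj]
    ring
end
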